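/- arXiv:gr-qc/9405032 — 8 statements merged into one kernel-verified Lean document; each statement's English description precedes it below -/
import Mathlib

section
/- Let ω₀ be a real-valued function defined and continuous on the complement of a finite set S in ℝ², and suppose ω₀ is asymptotically flat in the sense that there exist β ∈ ℝ and constants C, R₀ > 0 such that |ω₀(x,ρ) − β/r| ≤ C/r² whenever r = √(x²+ρ²) ≥ R₀. Fix L > 0 and define a₀ = 0 and aₙ = −β/(L|n|) for n ≠ 0. Then for every point (x,ρ) ∈ ℝ² such that (x+nL, ρ) ∉ S for all n ∈ ℤ, the series ∑_{n∈ℤ} ( ω₀(x+nL, ρ) + aₙ ) converges absolutely, and the resulting function ω satisfies the periodicity ω(x+L, ρ) = ω(x, ρ) at all such points. -/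
/-!
Beyond the radius `R₀` the flatness bound gives `ω₀(x+nL, ρ) = β/r + O(1/n²)`, and the distance
`r` to `(x+nL, ρ)` differs from `L|n|` by at most `|x| + |ρ|`, so `β/r − β/(L|n|) = O(1/n²)`:
the counterterms `aₙ` cancel the non-summable `β/(L|n|)` tail.  Shifting `x` by `L` shifts the
index of `ω₀` but not of `aₙ`; the discrepancy `∑ (aₙ − aₙ₊₁)` vanishes because `n ↦ −1 − n`
turns it into its own negative, `a` being even.
-/

open Filter

def AsymptoticallyFlat (ω₀ : ℝ × ℝ → ℝ) (β C R₀ : ℝ) : Prop :=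
  ∀ x ρ : ℝ, R₀ ≤ Real.sqrt (x ^ 2 + ρ ^ 2) →
    |ω₀ (x, ρ) - β / Real.sqrt (x ^ 2 + ρ ^ 2)| ≤ C / (x ^ 2 + ρ ^ 2)

lemma abs_sqrt_sq_add_sq_sub_abs_le (s ρ : ℝ) : |Real.sqrt (s ^ 2 + ρ ^ 2) - (|s|)| ≤ |ρ| := by
  have hlow : |s| ≤ Real.sqrt (s ^ 2 + ρ ^ 2) := Real.abs_le_sqrt (by nlinarith)
  have hup : Real.sqrt (s ^ 2 + ρ ^ 2) ≤ |s| + |ρ| :=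
    Real.sqrt_le_iff.mpr
      ⟨by positivity, by nlinarith [sq_abs s, sq_abs ρ, abs_nonneg s, abs_nonneg ρ]⟩
  rw [abs_le]
  constructor <;> linarith [abs_nonneg ρ]

lemma abs_div_sub_div_le_of_abs_sub_le {β r t A : ℝ} (ht : 0 < t) (hrt : |r - t| ≤ A)
    (hA : 2 * A ≤ t) : |β / r - β / t| ≤ 2 * |β| * A / t ^ 2 := by
  have hr : t / 2 ≤ r := by linarith [neg_abs_le (r - t)]
  have hA0 : 0 ≤ A := (abs_nonneg _).trans hrt
  have hr0 : 0 < r := by linarith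
  rw [div_sub_div _ _ hr0.ne' ht.ne', abs_div, abs_of_pos (mul_pos hr0 ht),
    show β * t - r * β = β * (t - r) by ring, abs_mul, abs_sub_comm]
  calc |β| * |r - t| / (r * t) ≤ |β| * A / (t / 2 * t) := by gcongr
    _ = 2 * |β| * A / t ^ 2 := by field_simp

namespace AsymptoticallyFlat

variable {ω₀ : ℝ × ℝ → ℝ} {β C R₀ : ℝ}

lemma abs_sub_div_abs_le (h : AsymptoticallyFlat ω₀ β C R₀) (hC : 0 ≤ C) (hR₀ : 0 < R₀)
    {x y ρ : ℝ} (hy : 2 * (|x| + |ρ| + R₀) ≤ |y|) :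
    |ω₀ (x + y, ρ) - β / (|y|)| ≤ (4 * C + 2 * |β| * (|x| + |ρ|)) / y ^ 2 := by
  set r := Real.sqrt ((x + y) ^ 2 + ρ ^ 2)
  have hry : |r - (|y|)| ≤ |x| + |ρ| :=
    calc |r - (|y|)| ≤ |r - (|x + y|)| + |(|x + y|) - (|y|)| := abs_sub_le _ _ _
      _ ≤ |ρ| + |x| := add_le_add (abs_sqrt_sq_add_sq_sub_abs_le _ _)
        ((abs_abs_sub_abs_le _ _).trans_eq (by rw [add_sub_cancel_right]))
      _ = |x| + |ρ| := add_comm _ _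
  have hy0 : 0 < |y| := by linarith [abs_nonneg x, abs_nonneg ρ]
  have hr : |y| / 2 ≤ r := by linarith [neg_abs_le (r - |y|), abs_nonneg x, abs_nonneg ρ]
  have hr2 : r ^ 2 = (x + y) ^ 2 + ρ ^ 2 := Real.sq_sqrt (by positivity)
  have hR : R₀ ≤ r := by linarith [abs_nonneg x, abs_nonneg ρ]
  have hflat : |ω₀ (x + y, ρ) - β / r| ≤ 4 * C / y ^ 2 :=
    calc |ω₀ (x + y, ρ) - β / r| ≤ C / r ^ 2 := hr2 ▸ h (x + y) ρ hR
      _ ≤ C / (|y| / 2) ^ 2 := by gcongr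
      _ = 4 * C / y ^ 2 := by rw [div_pow, sq_abs]; ring
  have hcounter : |β / r - β / (|y|)| ≤ 2 * |β| * (|x| + |ρ|) / y ^ 2 := by
    simpa [sq_abs] using abs_div_sub_div_le_of_abs_sub_le hy0 hry (by linarith)
  calc |ω₀ (x + y, ρ) - β / (|y|)|
      ≤ |ω₀ (x + y, ρ) - β / r| + |β / r - β / (|y|)| := abs_sub_le _ _ _
    _ ≤ (4 * C + 2 * |β| * (|x| + |ρ|)) / y ^ 2 := by rw [add_div]; gcongr

lemma summable_abs_add (h : AsymptoticallyFlat ω₀ β C R₀) (hC : 0 ≤ C) (hR₀ : 0 < R₀)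
    {L : ℝ} (hL : 0 < L) {a : ℤ → ℝ} (ha : ∀ n ≠ 0, a n = -β / (L * |(n : ℝ)|)) (x ρ : ℝ) :
    Summable fun n : ℤ => |ω₀ (x + n * L, ρ) + a n| := by
  set K := 4 * C + 2 * |β| * (|x| + |ρ|)
  have hmajorant : Summable fun n : ℤ => K / ((n : ℝ) * L) ^ 2 :=
    ((Real.summable_one_div_int_pow.mpr one_lt_two).mul_left (K / L ^ 2)).congr fun n => by ring
  have hfar : ∀ᶠ n : ℤ in cofinite, 2 * (|x| + |ρ| + R₀) / L ≤ ‖(n : ℝ)‖ :=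
    (tendsto_norm_cocompact_atTop.comp Int.tendsto_coe_cofinite).eventually_ge_atTop _
  refine Summable.of_norm_bounded_eventually hmajorant (hfar.mono fun n hn => ?_)
  rw [Real.norm_eq_abs, div_le_iff₀ hL] at hn
  have hnL : 2 * (|x| + |ρ| + R₀) ≤ |(n : ℝ) * L| := by rwa [abs_mul, abs_of_pos hL]
  have hn0 : n ≠ 0 := by
    rintro rfl
    simp only [Int.cast_zero, zero_mul, abs_zero] at hnL
    linarith [abs_nonneg x, abs_nonneg ρ]
  have han : a n = -(β / |(n : ℝ) * L|) := by
    rw [ha n hn0, abs_mul, abs_of_pos hL, mul_comm, neg_div]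
  rw [Real.norm_eq_abs, abs_abs, han, ← sub_eq_add_neg]
  exact h.abs_sub_div_abs_le hC hR₀ hnL

end AsymptoticallyFlat

section Shift

variable {E : Type*} [AddCommGroup E] [TopologicalSpace E] [IsTopologicalAddGroup E] [T2Space E]
  [IsAddTorsionFree E] {a : ℤ → E}

lemma tsum_sub_succ_eq_zero_of_even (ha : ∀ n, a (-n) = a n) :
    ∑' n : ℤ, (a n - a (n + 1)) = 0 := by
  have hanti : ∀ n : ℤ, a (-1 - n) - a (-1 - n + 1) = -(a n - a (n + 1)) := fun n => by
    rw [show -1 - n = -(n + 1) by ring, show -(n + 1) + 1 = -n by ring, ha, ha, neg_sub]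
  have h := (Equiv.subLeft (-1 : ℤ)).tsum_eq fun n => a n - a (n + 1)
  simp only [Equiv.subLeft_apply, hanti, tsum_neg] at h
  exact self_eq_neg.mp h.symm

lemma tsum_succ_add_eq_of_even {u : ℤ → E} (ha : ∀ n, a (-n) = a n)
    (hu : Summable fun n => u n + a n) (hu' : Summable fun n => u (n + 1) + a n) :
    ∑' n : ℤ, (u (n + 1) + a n) = ∑' n : ℤ, (u n + a n) := by
  have hshift : Summable fun n : ℤ => u (n + 1) + a (n + 1) :=
    (Equiv.addRight (1 : ℤ)).summable_iff.mpr hu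
  have hdiff : Summable fun n : ℤ => a n - a (n + 1) :=
    (hu'.sub hshift).congr fun n => by abel
  calc ∑' n : ℤ, (u (n + 1) + a n)
      = ∑' n : ℤ, ((u (n + 1) + a (n + 1)) + (a n - a (n + 1))) := tsum_congr fun n => by abel
    _ = ∑' n : ℤ, (u n + a n) := by
      rw [hshift.tsum_add hdiff, tsum_sub_succ_eq_zero_of_even ha, add_zero]
      exact (Equiv.addRight (1 : ℤ)).tsum_eq fun n => u n + a n

end Shift

theorem statement0_general (ω₀ : ℝ × ℝ → ℝ)
    (β C R₀ L : ℝ) (hC : 0 < C) (hR₀ : 0 < R₀) (hL : 0 < L)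
    (hflat : ∀ x ρ : ℝ, R₀ ≤ Real.sqrt (x^2 + ρ^2) →
      |ω₀ (x, ρ) - β / Real.sqrt (x^2 + ρ^2)| ≤ C / (x^2 + ρ^2))
    (a : ℤ → ℝ) (ha : ∀ n : ℤ, a n = if n = 0 then 0 else -β / (L * |(n : ℝ)|))
    (x ρ : ℝ) :
    Summable (fun n : ℤ => |ω₀ (x + n * L, ρ) + a n|) ∧
    (∑' n : ℤ, (ω₀ (x + L + n * L, ρ) + a n)) = ∑' n : ℤ, (ω₀ (x + n * L, ρ) + a n) := by
  have hsummable := AsymptoticallyFlat.summable_abs_add hflat hC.le hR₀ hL (a := a)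
    fun n hn => by rw [ha, if_neg hn]
  have heven : ∀ n, a (-n) = a n := fun n => by
    simp only [ha, neg_eq_zero, Int.cast_neg, abs_neg]
  have hstep : ∀ n : ℤ, x + L + n * L = x + ((n + 1 : ℤ) : ℝ) * L := fun n => by push_cast; ring
  refine ⟨hsummable x ρ, ?_⟩
  calc ∑' n : ℤ, (ω₀ (x + L + n * L, ρ) + a n)
      = ∑' n : ℤ, (ω₀ (x + ((n + 1 : ℤ) : ℝ) * L, ρ) + a n) := tsum_congr fun n => by rw [hstep]
    _ = ∑' n : ℤ, (ω₀ (x + n * L, ρ) + a n) :=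
      tsum_succ_add_eq_of_even (u := fun n : ℤ => ω₀ (x + n * L, ρ)) heven
        (summable_abs_iff.mp (hsummable x ρ))
        ((summable_abs_iff.mp (hsummable (x + L) ρ)).congr fun n => by rw [hstep])

/-- Let `ω₀` be real-valued, continuous on the complement of a finite set
`S ⊆ ℝ²`, and asymptotically flat: `|ω₀(x,ρ) − β/r| ≤ C/r²` for `r = √(x²+ρ²) ≥ R₀`.
Fix `L > 0` and set `a₀ = 0`, `aₙ = −β/(L|n|)` for `n ≠ 0`.  Then at every point `(x,ρ)`
with `(x+nL,ρ) ∉ S` for all `n ∈ ℤ`, the series `∑_{n∈ℤ} (ω₀(x+nL,ρ) + aₙ)` converges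
absolutely, and the resulting function is `L`-periodic in `x`. -/
theorem statement0 (S : Finset (ℝ × ℝ)) (ω₀ : ℝ × ℝ → ℝ)
    (hcont : ContinuousOn ω₀ ((S : Set (ℝ × ℝ)))ᶜ)
    (β C R₀ L : ℝ) (hC : 0 < C) (hR₀ : 0 < R₀) (hL : 0 < L)
    (hflat : ∀ x ρ : ℝ, R₀ ≤ Real.sqrt (x^2 + ρ^2) →
      |ω₀ (x, ρ) - β / Real.sqrt (x^2 + ρ^2)| ≤ C / (x^2 + ρ^2))
    (a : ℤ → ℝ) (ha : ∀ n : ℤ, a n = if n = 0 then 0 else -β / (L * |(n : ℝ)|))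
    (x ρ : ℝ) (hS : ∀ n : ℤ, ((x + n * L, ρ) : ℝ × ℝ) ∉ (S : Set (ℝ × ℝ))) :
    Summable (fun n : ℤ => |ω₀ (x + n * L, ρ) + a n|) ∧
    (∑' n : ℤ, (ω₀ (x + L + n * L, ρ) + a n)) = ∑' n : ℤ, (ω₀ (x + n * L, ρ) + a n) :=
  statement0_general ω₀ β C R₀ L hC hR₀ hL hflat a ha x ρ
end

section
/- Fix M > 0 and L > 2M, and let E₀ be the Schwarzschild Ernst potential with mass M. Then for every (x,ρ) ∈ ℝ × [0,∞) that is not of the form (±M + nL, 0) for some n ∈ ℤ, the infinite product E(x,ρ) = E₀(x,ρ) · ∏_{n=1}^∞ E₀(x+nL, ρ) E₀(x−nL, ρ) exp(4M/(nL)) converges, and the resulting function E satisfies E(x+L, ρ) = E(x, ρ) at all such points. -/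
/-- The Schwarzschild Ernst potential with mass `M`:
`E₀(x,ρ) = (r₁ + r₂ − 2M)/(r₁ + r₂ + 2M)` with `r₁ = √((x−M)²+ρ²)`, `r₂ = √((x+M)²+ρ²)`. -/
noncomputable def schwE (M x ρ : ℝ) : ℝ :=
  (Real.sqrt ((x - M)^2 + ρ^2) + Real.sqrt ((x + M)^2 + ρ^2) - 2*M) /
  (Real.sqrt ((x - M)^2 + ρ^2) + Real.sqrt ((x + M)^2 + ρ^2) + 2*M)

/-- The logarithm `ω₀ = log E₀` of the Schwarzschild Ernst potential. -/
noncomputable def schwOmega (M x ρ : ℝ) : ℝ := Real.log (schwE M x ρ)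

/-- The periodic Schwarzschild Ernst potential with mass `M` and period `L`:
`E(x,ρ) = E₀(x,ρ) ∏_{n=1}^∞ E₀(x+nL,ρ) E₀(x−nL,ρ) exp(4M/(nL))`. -/
noncomputable def perE (M L x ρ : ℝ) : ℝ :=
  schwE M x ρ * ∏' n : ℕ,
    (schwE M (x + ((n : ℝ) + 1) * L) ρ * schwE M (x - ((n : ℝ) + 1) * L) ρ *
      Real.exp (4*M / (((n : ℝ) + 1) * L)))

/-- The logarithm of the periodic Schwarzschild Ernst potential:
`ω(x,ρ) = ω₀(x,ρ) + ∑_{n=1}^∞ [ω₀(x+nL,ρ) + ω₀(x−nL,ρ) + 4M/(nL)]`. -/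
noncomputable def perOmega (M L x ρ : ℝ) : ℝ :=
  schwOmega M x ρ + ∑' n : ℕ,
    (schwOmega M (x + ((n : ℝ) + 1) * L) ρ + schwOmega M (x - ((n : ℝ) + 1) * L) ρ +
      4*M / (((n : ℝ) + 1) * L))

/-! If some factor `E₀(x + kL, ρ)` vanishes, it is also a factor of the product at `x + L`, and
both products are `0`. Otherwise every factor is positive and `E = exp ω` with `ω = perOmega`.
Since `r₁ + r₂ = 2y + O(1)` as `y → ∞`, the bounds `1 - 1/E₀ ≤ log E₀ ≤ E₀ - 1` give
`ω₀(t + c) = -2M/t + O(1/t²)`, so the `n`-th term `ω₀(x+nL) + ω₀(x−nL) + 4M/(nL)` is `O(1/n²)`: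
this is the convergence. Shifting `x` by `L` telescopes the series, up to the boundary terms
`ω₀(x + (N+1)L) − ω₀(x − NL)`, which tend to `0`; hence `ω` is `L`-periodic. -/

open Filter Topology Asymptotics

-- `r₁ + r₂`: the sum of the distances from `(y, ρ)` to the foci `(±M, 0)`.
noncomputable def focalDistSum (M y ρ : ℝ) : ℝ :=
  Real.sqrt ((y - M)^2 + ρ^2) + Real.sqrt ((y + M)^2 + ρ^2)

lemma schwE_eq_focalDistSum {M y ρ : ℝ} :
    schwE M y ρ = (focalDistSum M y ρ - 2*M) / (focalDistSum M y ρ + 2*M) := rfl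

lemma focalDistSum_neg {M y ρ : ℝ} : focalDistSum M (-y) ρ = focalDistSum M y ρ := by
  unfold focalDistSum
  rw [show (-y - M)^2 = (y + M)^2 by ring, show (-y + M)^2 = (y - M)^2 by ring, add_comm]

lemma schwOmega_neg {M y ρ : ℝ} : schwOmega M (-y) ρ = schwOmega M y ρ := by
  simp only [schwOmega, schwE_eq_focalDistSum, focalDistSum_neg]

lemma abs_add_abs_le_focalDistSum (M y ρ : ℝ) : |y - M| + |y + M| ≤ focalDistSum M y ρ :=
  add_le_add (Real.abs_le_sqrt (le_add_of_nonneg_right (sq_nonneg ρ)))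
    (Real.abs_le_sqrt (le_add_of_nonneg_right (sq_nonneg ρ)))

lemma focalDistSum_le_abs_add_abs (M y ρ : ℝ) : focalDistSum M y ρ ≤ |y - M| + |y + M| + 2*|ρ| := by
  have key : ∀ a : ℝ, Real.sqrt (a^2 + ρ^2) ≤ |a| + |ρ| := fun a =>
    Real.sqrt_le_iff.mpr ⟨by positivity, by
      nlinarith [sq_abs a, sq_abs ρ, mul_nonneg (abs_nonneg a) (abs_nonneg ρ)]⟩
  unfold focalDistSum
  linarith [key (y - M), key (y + M)]

lemma two_mul_abs_le_focalDistSum (M y ρ : ℝ) : 2*|M| ≤ focalDistSum M y ρ := by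
  have : |(y + M) - (y - M)| ≤ |y + M| + |y - M| := abs_sub _ _
  rw [show (y + M) - (y - M) = 2*M by ring, abs_mul, abs_two] at this
  linarith [abs_add_abs_le_focalDistSum M y ρ]

lemma schwE_nonneg {M y ρ : ℝ} : 0 ≤ schwE M y ρ := by
  have := two_mul_abs_le_focalDistSum M y ρ
  rw [schwE_eq_focalDistSum]
  exact div_nonneg (by linarith [le_abs_self M]) (by linarith [neg_abs_le M])

lemma focalDistSum_mem_Icc {M y : ℝ} (ρ : ℝ) (hy : |M| ≤ y) :
    2*y ≤ focalDistSum M y ρ ∧ focalDistSum M y ρ ≤ 2*y + 2*|ρ| := by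
  have h₁ : |y - M| = y - M := abs_of_nonneg (by linarith [le_abs_self M])
  have h₂ : |y + M| = y + M := abs_of_nonneg (by linarith [neg_abs_le M])
  constructor
  · linarith [abs_add_abs_le_focalDistSum M y ρ]
  · linarith [focalDistSum_le_abs_add_abs M y ρ]

lemma abs_two_mul_div_sub_four_mul_div_le {M t r : ℝ} (hM : 0 ≤ M) (ht : 0 < t) (htr : t ≤ r) :
    |2*M/t - 4*M/r| ≤ 2*M*|r - 2*t|/t^2 := by
  have hr : 0 < r := ht.trans_le htr
  have : 2*M/t - 4*M/r = 2*M*(r - 2*t)/(t*r) := by field_simp; ring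
  rw [this, abs_div, abs_mul, abs_of_nonneg (by positivity : 0 ≤ 2*M),
    abs_of_pos (by positivity : 0 < t*r)]
  exact div_le_div_of_nonneg_left (by positivity) (by positivity) (by nlinarith)

section Asymptotics

variable {M : ℝ}

lemma abs_schwOmega_add_le {y t ρ : ℝ} (hM : 0 ≤ M) (ht : 0 < t)
    (hts : t ≤ focalDistSum M y ρ - 2*M) :
    |schwOmega M y ρ + 2*M/t| ≤ 2*M*(|focalDistSum M y ρ - 2*t| + 2*M)/t^2 := by
  set s := focalDistSum M y ρ
  have hE : schwE M y ρ = (s - 2*M)/(s + 2*M) := rfl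
  have hEpos : 0 < schwE M y ρ := by rw [hE]; exact div_pos (by linarith) (by linarith)
  have hlo : -(4*M/(s - 2*M)) ≤ schwOmega M y ρ := by
    have := Real.one_sub_inv_le_log_of_pos hEpos
    rw [hE, inv_div, show 1 - (s + 2*M)/(s - 2*M) = -(4*M/(s - 2*M)) by
      field_simp [(by linarith : s - 2*M ≠ 0)]; ring] at this
    exact this
  have hhi : schwOmega M y ρ ≤ -(4*M/(s + 2*M)) := by
    have := Real.log_le_sub_one_of_pos hEpos
    rw [hE, show (s - 2*M)/(s + 2*M) - 1 = -(4*M/(s + 2*M)) by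
      field_simp [(by linarith : s + 2*M ≠ 0)]; ring] at this
    exact this
  have hclose : ∀ r, t ≤ r → |r - s| ≤ 2*M →
      |2*M/t - 4*M/r| ≤ 2*M*(|s - 2*t| + 2*M)/t^2 := fun r htr hrs =>
    (abs_two_mul_div_sub_four_mul_div_le hM ht htr).trans <| by
      gcongr
      calc |r - 2*t| = |(r - s) + (s - 2*t)| := by ring_nf
        _ ≤ |r - s| + |s - 2*t| := abs_add_le _ _
        _ ≤ |s - 2*t| + 2*M := by linarith
  calc |schwOmega M y ρ + 2*M/t| ≤ max |2*M/t - 4*M/(s - 2*M)| |2*M/t - 4*M/(s + 2*M)| :=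
        abs_le_max_abs_abs (by linarith) (by linarith)
    _ ≤ 2*M*(|s - 2*t| + 2*M)/t^2 :=
        max_le (hclose _ hts (by rw [abs_le]; constructor <;> linarith))
          (hclose _ (by linarith) (by rw [abs_le]; constructor <;> linarith))

lemma abs_schwOmega_add_div_le {t ρ : ℝ} (hM : 0 < M) (c : ℝ) (ht : 2*M + 2*|c| ≤ t) :
    |schwOmega M (t + c) ρ + 2*M/t| ≤ 4*M*(|ρ| + |c| + M)/t^2 := by
  have hc := neg_abs_le c
  have ht₀ : 0 < t := by linarith [abs_nonneg c]
  obtain ⟨hs₁, hs₂⟩ := focalDistSum_mem_Icc (y := t + c) ρ (by rw [abs_of_pos hM]; linarith)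
  refine (abs_schwOmega_add_le hM.le ht₀ (by linarith)).trans ?_
  have : |focalDistSum M (t + c) ρ - 2*t| ≤ 2*|ρ| + 2*|c| := by
    rw [abs_le]; constructor <;> linarith [le_abs_self c]
  gcongr ?_ / _
  nlinarith

lemma schwOmega_add_div_isBigO (hM : 0 < M) (c ρ : ℝ) :
    (fun t => schwOmega M (t + c) ρ + 2*M/t) =O[atTop] fun t => 1/t^2 := by
  refine IsBigO.of_bound (4*M*(|ρ| + |c| + M)) ?_
  filter_upwards [eventually_ge_atTop (2*M + 2*|c|)] with t ht
  rw [Real.norm_eq_abs, Real.norm_of_nonneg (by positivity), mul_one_div]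
  exact abs_schwOmega_add_div_le hM c ht

lemma tendsto_schwOmega_atTop (hM : 0 < M) (ρ : ℝ) :
    Tendsto (fun y => schwOmega M y ρ) atTop (𝓝 0) := by
  have h₁ := (schwOmega_add_div_isBigO hM 0 ρ).trans_tendsto
    (tendsto_const_nhds.div_atTop (tendsto_pow_atTop two_ne_zero))
  have h₂ : Tendsto (fun t => 2*M/t) atTop (𝓝 0) := tendsto_const_nhds.div_atTop tendsto_id
  simpa using h₁.sub h₂

end Asymptotics

lemma HasSum.eq_sub_of_tendsto {G : Type*} [AddCommGroup G] [TopologicalSpace G]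
    [IsTopologicalAddGroup G] [T2Space G] {f : ℕ → G} {a l : G}
    (h : HasSum (fun n => f (n + 1) - f n) a) (hf : Tendsto f atTop (𝓝 l)) : a = l - f 0 :=
  tendsto_nhds_unique h.tendsto_sum_nat (by simpa only [Finset.sum_range_sub] using hf.sub_const _)

noncomputable def perOmegaTerm (M L x ρ : ℝ) (n : ℕ) : ℝ :=
  schwOmega M (x + ((n : ℝ) + 1) * L) ρ + schwOmega M (x - ((n : ℝ) + 1) * L) ρ +
    4*M / (((n : ℝ) + 1) * L)

noncomputable def perEFactor (M L x ρ : ℝ) (n : ℕ) : ℝ :=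
  schwE M (x + ((n : ℝ) + 1) * L) ρ * schwE M (x - ((n : ℝ) + 1) * L) ρ *
    Real.exp (4*M / (((n : ℝ) + 1) * L))

section Periodic

variable {M L : ℝ}

lemma perOmega_eq {x ρ : ℝ} :
    perOmega M L x ρ = schwOmega M x ρ + ∑' n, perOmegaTerm M L x ρ n := rfl

lemma perE_eq {x ρ : ℝ} : perE M L x ρ = schwE M x ρ * ∏' n, perEFactor M L x ρ n := rfl

lemma tendsto_succ_mul_atTop (hL : 0 < L) :
    Tendsto (fun n : ℕ => ((n : ℝ) + 1) * L) atTop atTop :=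
  (tendsto_atTop_add_const_right _ 1 tendsto_natCast_atTop_atTop).atTop_mul_const hL

lemma summable_perOmegaTerm (hM : 0 < M) (hL : 0 < L) (x ρ : ℝ) :
    Summable (perOmegaTerm M L x ρ) := by
  have hpair : (fun t => schwOmega M (x + t) ρ + schwOmega M (x - t) ρ + 4*M/t) =O[atTop]
      fun t => 1/t^2 := by
    refine ((schwOmega_add_div_isBigO hM x ρ).add
      (schwOmega_add_div_isBigO hM (-x) ρ)).congr_left fun t => ?_
    rw [show t + -x = -(x - t) by ring, schwOmega_neg, add_comm t x]
    ring
  refine summable_of_isBigO_nat ?_ (hpair.comp_tendsto (tendsto_succ_mul_atTop hL))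
  refine (((summable_nat_add_iff 1).mpr (Real.summable_one_div_nat_pow.mpr one_lt_two)).mul_left
    (1/L^2)).congr fun n => ?_
  simp only [Function.comp_apply]
  push_cast
  field_simp

lemma perOmega_add_period (hM : 0 < M) (hL : 0 < L) (x ρ : ℝ) :
    perOmega M L (x + L) ρ = perOmega M L x ρ := by
  set K : ℕ → ℝ := fun n => schwOmega M (x + ((n : ℝ) + 1) * L) ρ - schwOmega M (x - n * L) ρ
  have hdiff : (fun n => perOmegaTerm M L (x + L) ρ n - perOmegaTerm M L x ρ n) =
      fun n => K (n + 1) - K n := by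
    funext n
    simp only [perOmegaTerm, K, Nat.cast_add, Nat.cast_one]
    ring_nf
  have hK : Tendsto K atTop (𝓝 0) := by
    have h₁ := (tendsto_schwOmega_atTop hM ρ).comp
      (tendsto_atTop_add_const_left _ x (tendsto_succ_mul_atTop hL))
    have h₂ := (tendsto_schwOmega_atTop hM ρ).comp
      (tendsto_atTop_add_const_right _ (-x) (tendsto_natCast_atTop_atTop.atTop_mul_const hL))
    refine (sub_zero (0 : ℝ) ▸ h₁.sub h₂).congr fun n => ?_
    simp only [K, Function.comp_apply, ← sub_eq_add_neg]
    rw [← schwOmega_neg (y := x - n * L), neg_sub]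
  have hsum := (summable_perOmegaTerm hM hL (x + L) ρ).hasSum.sub
    (summable_perOmegaTerm hM hL x ρ).hasSum
  rw [hdiff] at hsum
  have := hsum.eq_sub_of_tendsto hK
  simp only [K, Nat.cast_zero, zero_add, one_mul, zero_mul, sub_zero] at this
  rw [perOmega_eq, perOmega_eq]
  linarith

lemma perEFactor_eq_exp {x ρ : ℝ} {n : ℕ} (h₁ : schwE M (x + ((n : ℝ) + 1) * L) ρ ≠ 0)
    (h₂ : schwE M (x - ((n : ℝ) + 1) * L) ρ ≠ 0) :
    perEFactor M L x ρ n = Real.exp (perOmegaTerm M L x ρ n) := by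
  rw [perOmegaTerm, Real.exp_add, Real.exp_add, schwOmega, schwOmega,
    Real.exp_log (schwE_nonneg.lt_of_ne' h₁), Real.exp_log (schwE_nonneg.lt_of_ne' h₂)]
  rfl

lemma multipliable_perEFactor (hM : 0 < M) (hL : 0 < L) (x ρ : ℝ) :
    Multipliable (perEFactor M L x ρ) := by
  by_cases! hzero : ∃ n, perEFactor M L x ρ n = 0
  · exact multipliable_of_exists_eq_zero hzero
  have : perEFactor M L x ρ = Real.exp ∘ perOmegaTerm M L x ρ := funext fun n =>
    perEFactor_eq_exp (fun h => hzero n (by simp [perEFactor, h]))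
      (fun h => hzero n (by simp [perEFactor, h]))
  rw [this]
  exact ⟨_, (summable_perOmegaTerm hM hL x ρ).hasSum.rexp⟩

lemma perE_eq_zero_of_schwE_eq_zero {x ρ : ℝ} {k : ℤ} (hk : schwE M (x + k * L) ρ = 0) :
    perE M L x ρ = 0 := by
  rw [perE_eq]
  rcases k with (_ | n) | n
  · simp only [Int.ofNat_eq_natCast, Nat.cast_zero, Int.cast_zero, zero_mul, add_zero] at hk
    rw [hk, zero_mul]
  · refine (congrArg _ (tprod_of_exists_eq_zero ⟨n, ?_⟩)).trans (mul_zero _)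
    rw [Int.ofNat_eq_natCast] at hk
    push_cast at hk
    simp only [perEFactor, hk, zero_mul]
  · refine (congrArg _ (tprod_of_exists_eq_zero ⟨n, ?_⟩)).trans (mul_zero _)
    rw [Int.cast_negSucc, neg_mul, ← sub_eq_add_neg] at hk
    push_cast at hk
    simp only [perEFactor, hk, mul_zero, zero_mul]

lemma perE_eq_exp_perOmega {x ρ : ℝ} (hM : 0 < M) (hL : 0 < L)
    (h : ∀ k : ℤ, schwE M (x + k * L) ρ ≠ 0) : perE M L x ρ = Real.exp (perOmega M L x ρ) := by
  have hfac : perEFactor M L x ρ = Real.exp ∘ perOmegaTerm M L x ρ := funext fun n =>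
    perEFactor_eq_exp (by exact_mod_cast h (n + 1))
      (by simpa [sub_eq_add_neg, ← neg_mul] using h (-(n + 1)))
  rw [perE_eq, perOmega_eq, hfac, (summable_perOmegaTerm hM hL x ρ).hasSum.rexp.tprod_eq,
    Real.exp_add, schwOmega, Real.exp_log (schwE_nonneg.lt_of_ne' (by simpa using h 0))]

end Periodic

theorem statement4_general (M L : ℝ) (hM : 0 < M) (hL : 2*M < L) (x ρ : ℝ) :
    Multipliable (fun n : ℕ =>
      schwE M (x + ((n : ℝ) + 1) * L) ρ * schwE M (x - ((n : ℝ) + 1) * L) ρ *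
        Real.exp (4*M / (((n : ℝ) + 1) * L))) ∧
    perE M L (x + L) ρ = perE M L x ρ := by
  have hL₀ : 0 < L := by linarith
  refine ⟨multipliable_perEFactor hM hL₀ x ρ, ?_⟩
  by_cases! hzero : ∃ k : ℤ, schwE M (x + k * L) ρ = 0
  · obtain ⟨k, hk⟩ := hzero
    have hk' : schwE M (x + L + ((k - 1 : ℤ) : ℝ) * L) ρ = 0 := by
      rw [show x + L + ((k - 1 : ℤ) : ℝ) * L = x + k * L by push_cast; ring]
      exact hk
    rw [perE_eq_zero_of_schwE_eq_zero hk', perE_eq_zero_of_schwE_eq_zero hk]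
  · have hzero' : ∀ k : ℤ, schwE M (x + L + k * L) ρ ≠ 0 := fun k => by
      rw [show x + L + k * L = x + ((k + 1 : ℤ) : ℝ) * L by push_cast; ring]
      exact hzero _
    rw [perE_eq_exp_perOmega hM hL₀ hzero', perE_eq_exp_perOmega hM hL₀ hzero,
      perOmega_add_period hM hL₀]

/-- For `M > 0`, `L > 2M`, and every `(x,ρ) ∈ ℝ × [0,∞)` not of the form
`(±M + nL, 0)`, the infinite product defining the periodic Schwarzschild Ernst potential
converges, and the resulting function satisfies `E(x+L,ρ) = E(x,ρ)`. -/
theorem statement4 (M L : ℝ) (hM : 0 < M) (hL : 2*M < L) (x ρ : ℝ) (hρ : 0 ≤ ρ)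
    (hreg : ∀ n : ℤ, ¬ (ρ = 0 ∧ (x = M + n * L ∨ x = -M + n * L))) :
    Multipliable (fun n : ℕ =>
      schwE M (x + ((n : ℝ) + 1) * L) ρ * schwE M (x - ((n : ℝ) + 1) * L) ρ *
        Real.exp (4*M / (((n : ℝ) + 1) * L))) ∧
    perE M L (x + L) ρ = perE M L x ρ :=
  statement4_general M L hM hL x ρ
end

section
/- Fix M > 0 and L > 2M, and let ω(x,ρ) = ω₀(x,ρ) + ∑_{n=1}^∞ [ ω₀(x+nL,ρ) + ω₀(x−nL,ρ) + 4M/(nL) ] be the logarithm of the periodic Schwarzschild Ernst potential. Then for every (x,ρ) with ρ > 0, the derivative of ω with respect to ρ² is given by the convergent series ∂ω/∂(ρ²) = ∑_{n∈ℤ} 2M ( s₁(n) + s₂(n) ) / ( [s₁(n)+s₂(n)+2M][s₁(n)+s₂(n)−2M] s₁(n) s₂(n) ), where s₁(n) = √((x+nL+M)² + ρ²) and s₂(n) = √((x+nL−M)² + ρ²). Equivalently, ∂ω/∂ρ = 2ρ times this sum. -/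
open Real

noncomputable def gfun (M a u : ℝ) : ℝ :=
  Real.log ((Real.sqrt ((a - M)^2 + u) + Real.sqrt ((a + M)^2 + u) - 2*M) /
    (Real.sqrt ((a - M)^2 + u) + Real.sqrt ((a + M)^2 + u) + 2*M))

noncomputable def Dfun (M a u : ℝ) : ℝ :=
  2*M*(Real.sqrt ((a - M)^2 + u) + Real.sqrt ((a + M)^2 + u)) /
  ((Real.sqrt ((a - M)^2 + u) + Real.sqrt ((a + M)^2 + u) + 2*M) *
   (Real.sqrt ((a - M)^2 + u) + Real.sqrt ((a + M)^2 + u) - 2*M) *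
   Real.sqrt ((a - M)^2 + u) * Real.sqrt ((a + M)^2 + u))

lemma S_gt_2M {M a u : ℝ} (hM : 0 < M) (hu : 0 < u) :
    2*M < Real.sqrt ((a - M)^2 + u) + Real.sqrt ((a + M)^2 + u) := by
  have h1 : |a - M| ≤ Real.sqrt ((a - M)^2 + u) := by
    rw [← Real.sqrt_sq_eq_abs]
    exact Real.sqrt_le_sqrt (by linarith)
  have h2 : |a + M| < Real.sqrt ((a + M)^2 + u) := by
    rw [← Real.sqrt_sq_eq_abs]
    exact Real.sqrt_lt_sqrt (sq_nonneg _) (by linarith)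
  have := neg_abs_le (a - M)
  have := le_abs_self (a + M)
  linarith

lemma hasDerivAt_gfun {M a u : ℝ} (hM : 0 < M) (hu : 0 < u) :
    HasDerivAt (fun v => gfun M a v) (Dfun M a u) u := by
  have h1pos : (0:ℝ) < (a - M)^2 + u := by positivity
  have h2pos : (0:ℝ) < (a + M)^2 + u := by positivity
  set r1 := Real.sqrt ((a - M)^2 + u) with hr1
  set r2 := Real.sqrt ((a + M)^2 + u) with hr2
  have hr1pos : 0 < r1 := Real.sqrt_pos.mpr h1pos
  have hr2pos : 0 < r2 := Real.sqrt_pos.mpr h2pos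
  have hS : 2*M < r1 + r2 := S_gt_2M hM hu
  have d1 : HasDerivAt (fun v : ℝ => Real.sqrt ((a - M)^2 + v)) (1/(2*r1)) u := by
    have h := ((hasDerivAt_id u).const_add ((a - M)^2)).sqrt (ne_of_gt h1pos)
    simpa using h
  have d2 : HasDerivAt (fun v : ℝ => Real.sqrt ((a + M)^2 + v)) (1/(2*r2)) u := by
    have h := ((hasDerivAt_id u).const_add ((a + M)^2)).sqrt (ne_of_gt h2pos)
    simpa using h
  have dnum : HasDerivAt (fun v : ℝ => Real.sqrt ((a - M)^2 + v) + Real.sqrt ((a + M)^2 + v) - 2*M)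
      (1/(2*r1) + 1/(2*r2)) u := (d1.add d2).sub_const _
  have dden : HasDerivAt (fun v : ℝ => Real.sqrt ((a - M)^2 + v) + Real.sqrt ((a + M)^2 + v) + 2*M)
      (1/(2*r1) + 1/(2*r2)) u := (d1.add d2).add_const _
  have hden_ne : r1 + r2 + 2*M ≠ 0 := by positivity
  have dq := dnum.div dden hden_ne
  have hq_pos : 0 < (r1 + r2 - 2*M)/(r1 + r2 + 2*M) := div_pos (by linarith) (by positivity)
  have dlog := dq.log (ne_of_gt hq_pos)
  convert dlog using 1
  · rfl
  simp only [Pi.div_apply]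
  rw [Dfun, ← hr1, ← hr2]
  have hne1 : r1 + r2 + 2*M ≠ 0 := by positivity
  have hne2 : r1 + r2 - 2*M ≠ 0 := by linarith
  field_simp
  ring

lemma Dfun_nonneg {M a u : ℝ} (hM : 0 < M) (hu : 0 < u) : 0 ≤ Dfun M a u := by
  have h1pos : (0:ℝ) < (a - M)^2 + u := by positivity
  have h2pos : (0:ℝ) < (a + M)^2 + u := by positivity
  have hr1 : 0 < Real.sqrt ((a - M)^2 + u) := Real.sqrt_pos.mpr h1pos
  have hr2 : 0 < Real.sqrt ((a + M)^2 + u) := Real.sqrt_pos.mpr h2pos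
  have hS := S_gt_2M (a := a) hM hu
  rw [Dfun]
  apply div_nonneg (by positivity)
  have : 0 < (Real.sqrt ((a - M)^2 + u) + Real.sqrt ((a + M)^2 + u) + 2*M) *
      (Real.sqrt ((a - M)^2 + u) + Real.sqrt ((a + M)^2 + u) - 2*M) *
      Real.sqrt ((a - M)^2 + u) * Real.sqrt ((a + M)^2 + u) := by
    apply mul_pos (mul_pos (mul_pos (by linarith) (by linarith)) hr1) hr2
  exact this.le

lemma Dfun_le_uniform {M a u : ℝ} (hM : 0 < M) (hu : 0 < u) :
    Dfun M a u ≤ M / (u * Real.sqrt u) := by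
  have h1pos : (0:ℝ) < (a - M)^2 + u := by positivity
  have h2pos : (0:ℝ) < (a + M)^2 + u := by positivity
  set r1 := Real.sqrt ((a - M)^2 + u) with hr1
  set r2 := Real.sqrt ((a + M)^2 + u) with hr2
  have hr1p : 0 < r1 := Real.sqrt_pos.mpr h1pos
  have hr2p : 0 < r2 := Real.sqrt_pos.mpr h2pos
  have hS : 2*M < r1 + r2 := S_gt_2M hM hu
  have hup : 0 < Real.sqrt u := Real.sqrt_pos.mpr hu
  have hsq1 : r1^2 = (a - M)^2 + u := Real.sq_sqrt h1pos.le
  have hsq2 : r2^2 = (a + M)^2 + u := Real.sq_sqrt h2pos.le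
  have hsqu : Real.sqrt u ^ 2 = u := Real.sq_sqrt hu.le
  have hu1 : Real.sqrt u ≤ r1 := Real.sqrt_le_sqrt (by nlinarith [sq_nonneg (a-M)])
  have hu2 : Real.sqrt u ≤ r2 := Real.sqrt_le_sqrt (by nlinarith [sq_nonneg (a+M)])
  -- r1 * r2 ≥ u - (a^2 - M^2)
  have hprod : u - (a^2 - M^2) ≤ r1 * r2 := by
    have h : r1 * r2 = Real.sqrt (((a - M)^2 + u) * ((a + M)^2 + u)) :=
      (Real.sqrt_mul h1pos.le _).symm
    rw [h]
    have h2 : u - (a^2 - M^2) ≤ |u - (a^2 - M^2)| := le_abs_self _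
    have h3 : |u - (a^2 - M^2)| = Real.sqrt ((u - (a^2 - M^2))^2) := (Real.sqrt_sq_eq_abs _).symm
    refine h2.trans (h3.le.trans (Real.sqrt_le_sqrt ?_))
    nlinarith [sq_nonneg (a*u), sq_nonneg u, mul_pos hu hu, sq_nonneg a]
  have hQ : 4*u ≤ (r1 + r2 + 2*M) * (r1 + r2 - 2*M) := by nlinarith
  have hQpos : 0 < (r1 + r2 + 2*M) * (r1 + r2 - 2*M) * r1 * r2 :=
    mul_pos (mul_pos (mul_pos (by linarith) (by linarith)) hr1p) hr2p
  rw [Dfun, ← hr1, ← hr2, div_le_div_iff₀ hQpos (by positivity)]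
  -- goal: 2*M*(r1+r2) * (u * √u) ≤ M * ((r1+r2+2M)*(r1+r2-2M)*r1*r2)
  have key : 2*(r1 + r2) * (u * Real.sqrt u) ≤ (r1 + r2 + 2*M) * (r1 + r2 - 2*M) * r1 * r2 := by
    have h1 : (r1 + r2) * Real.sqrt u ≤ 2 * (r1 * r2) := by nlinarith
    have h2 : 4*u * (r1 * r2) ≤ (r1 + r2 + 2*M) * (r1 + r2 - 2*M) * (r1 * r2) := by
      apply mul_le_mul_of_nonneg_right hQ (by positivity)
    nlinarith [mul_pos hr1p hr2p]
  nlinarith [key, hM]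

lemma abs_sub_le_absM {M a : ℝ} (hM : 0 ≤ M) : |a| - M ≤ |a - M| := by
  have h2 : |a| - |M| ≤ |a - M| := abs_sub_abs_le_abs_sub a M
  rw [abs_of_nonneg hM] at h2; exact h2

lemma abs_add_le_absM {M a : ℝ} (hM : 0 ≤ M) : |a| - M ≤ |a + M| := by
  have h2 : |a| - |(-M)| ≤ |a - (-M)| := abs_sub_abs_le_abs_sub a (-M)
  rw [abs_neg, abs_of_nonneg hM, sub_neg_eq_add] at h2; exact h2

lemma abs_le_r1 {M a u : ℝ} (hM : 0 ≤ M) (hu : 0 ≤ u) :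
    |a| - M ≤ Real.sqrt ((a - M)^2 + u) := by
  have h1 : |a - M| ≤ Real.sqrt ((a - M)^2 + u) := by
    rw [← Real.sqrt_sq_eq_abs]; exact Real.sqrt_le_sqrt (by linarith)
  have := abs_sub_le_absM (a := a) hM
  linarith

lemma abs_le_r2 {M a u : ℝ} (hM : 0 ≤ M) (hu : 0 ≤ u) :
    |a| - M ≤ Real.sqrt ((a + M)^2 + u) := by
  have h1 : |a + M| ≤ Real.sqrt ((a + M)^2 + u) := by
    rw [← Real.sqrt_sq_eq_abs]; exact Real.sqrt_le_sqrt (by linarith)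
  have := abs_add_le_absM (a := a) hM
  linarith

lemma S_ge_2abs {M a u : ℝ} (hu : 0 ≤ u) :
    2*|a| ≤ Real.sqrt ((a - M)^2 + u) + Real.sqrt ((a + M)^2 + u) := by
  have h1 : |a - M| ≤ Real.sqrt ((a - M)^2 + u) := by
    rw [← Real.sqrt_sq_eq_abs]; exact Real.sqrt_le_sqrt (by linarith)
  have h2 : |a + M| ≤ Real.sqrt ((a + M)^2 + u) := by
    rw [← Real.sqrt_sq_eq_abs]; exact Real.sqrt_le_sqrt (by linarith)
  have h3 : |2*a| ≤ |a - M| + |a + M| := by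
    have := abs_add_le (a - M) (a + M)
    have h4 : (a - M) + (a + M) = 2*a := by ring
    rw [h4] at this; linarith
  have : |2*a| = 2*|a| := by rw [abs_mul]; simp
  linarith

lemma Dfun_le_decay {M a u : ℝ} (hM : 0 < M) (hu : 0 < u) (ha : M < |a|) :
    Dfun M a u ≤ M / (|a| - M)^3 := by
  have h1pos : (0:ℝ) < (a - M)^2 + u := by positivity
  have h2pos : (0:ℝ) < (a + M)^2 + u := by positivity
  set r1 := Real.sqrt ((a - M)^2 + u) with hr1
  set r2 := Real.sqrt ((a + M)^2 + u) with hr2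
  have hr1p : 0 < r1 := Real.sqrt_pos.mpr h1pos
  have hr2p : 0 < r2 := Real.sqrt_pos.mpr h2pos
  have hS : 2*M < r1 + r2 := S_gt_2M hM hu
  have hd : 0 < |a| - M := by linarith
  have ha1 : |a| - M ≤ r1 := abs_le_r1 hM.le hu.le
  have ha2 : |a| - M ≤ r2 := abs_le_r2 hM.le hu.le
  have hS2 : 2*|a| ≤ r1 + r2 := S_ge_2abs hu.le
  have hQpos : 0 < (r1 + r2 + 2*M) * (r1 + r2 - 2*M) * r1 * r2 :=
    mul_pos (mul_pos (mul_pos (by linarith) (by linarith)) hr1p) hr2p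
  rw [Dfun, ← hr1, ← hr2, div_le_div_iff₀ hQpos (by positivity)]
  -- 2*M*(r1+r2)*(|a|-M)^3 ≤ M*((r1+r2+2M)*(r1+r2-2M)*r1*r2)
  have key : 2*(r1 + r2)*(|a| - M)^3 ≤ (r1 + r2 + 2*M)*(r1 + r2 - 2*M)*r1*r2 := by
    have e1 : 2*(|a| - M) ≤ r1 + r2 - 2*M := by linarith
    have e2 : (|a| - M)^2 ≤ r1 * r2 := by nlinarith
    have e3 : r1 + r2 ≤ r1 + r2 + 2*M := by linarith
    calc 2*(r1 + r2)*(|a| - M)^3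
        = (r1 + r2) * (2*(|a| - M)) * (|a| - M)^2 := by ring
      _ ≤ (r1 + r2 + 2*M) * (r1 + r2 - 2*M) * (r1 * r2) := by
          apply mul_le_mul (mul_le_mul e3 e1 (by positivity) (by linarith)) e2 (by positivity)
          have : 0 < (r1 + r2 + 2*M) * (r1 + r2 - 2*M) := mul_pos (by linarith) (by linarith)
          exact this.le
      _ = (r1 + r2 + 2*M)*(r1 + r2 - 2*M)*r1*r2 := by ring
  nlinarith [key]

lemma S_le_upper {M a u : ℝ} (hM : 0 < M) (hu : 0 < u) (ha : M < |a|) :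
    Real.sqrt ((a - M)^2 + u) + Real.sqrt ((a + M)^2 + u) ≤ 2*|a| + u/(|a| - M) := by
  have hd : 0 < |a| - M := by linarith
  have hc1 : |a| - M ≤ |a - M| := abs_sub_le_absM hM.le
  have hc2 : |a| - M ≤ |a + M| := abs_add_le_absM hM.le
  have hc1p : 0 < |a - M| := lt_of_lt_of_le hd hc1
  have hc2p : 0 < |a + M| := lt_of_lt_of_le hd hc2
  have h1 : Real.sqrt ((a - M)^2 + u) ≤ |a - M| + u/(2*(|a| - M)) := by
    have hb : (a - M)^2 + u ≤ (|a - M| + u/(2*(|a| - M)))^2 := by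
      have e : |a - M|^2 = (a - M)^2 := sq_abs _
      have : u ≤ 2 * |a - M| * (u/(2*(|a| - M))) := by
        have : 2 * |a - M| * (u/(2*(|a| - M))) = |a - M| * u / (|a| - M) := by
          field_simp
        rw [this, le_div_iff₀ hd]
        nlinarith
      nlinarith [sq_nonneg (u/(2*(|a| - M)))]
    calc Real.sqrt ((a - M)^2 + u) ≤ Real.sqrt ((|a - M| + u/(2*(|a| - M)))^2) :=
          Real.sqrt_le_sqrt hb
      _ = |a - M| + u/(2*(|a| - M)) := Real.sqrt_sq (by positivity)
  have h2 : Real.sqrt ((a + M)^2 + u) ≤ |a + M| + u/(2*(|a| - M)) := by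
    have hb : (a + M)^2 + u ≤ (|a + M| + u/(2*(|a| - M)))^2 := by
      have e : |a + M|^2 = (a + M)^2 := sq_abs _
      have : u ≤ 2 * |a + M| * (u/(2*(|a| - M))) := by
        have : 2 * |a + M| * (u/(2*(|a| - M))) = |a + M| * u / (|a| - M) := by
          field_simp
        rw [this, le_div_iff₀ hd]
        nlinarith
      nlinarith [sq_nonneg (u/(2*(|a| - M)))]
    calc Real.sqrt ((a + M)^2 + u) ≤ Real.sqrt ((|a + M| + u/(2*(|a| - M)))^2) :=
          Real.sqrt_le_sqrt hb
      _ = |a + M| + u/(2*(|a| - M)) := Real.sqrt_sq (by positivity)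
  have habs : |a - M| + |a + M| = 2*|a| := by
    rcases abs_cases a with ⟨h, h'⟩ | ⟨h, h'⟩ <;>
      rcases abs_cases (a - M) with ⟨g, g'⟩ | ⟨g, g'⟩ <;>
      rcases abs_cases (a + M) with ⟨f, f'⟩ | ⟨f, f'⟩ <;> linarith
  have : u/(2*(|a| - M)) + u/(2*(|a| - M)) = u/(|a| - M) := by
    field_simp
    ring
  linarith

lemma gfun_bound {M a u ℓ : ℝ} (hM : 0 < M) (hu : 0 < u) (ha : M + 1 ≤ |a|) (hℓ : 0 < ℓ) :
    |gfun M a u + 2*M/ℓ| ≤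
      4*M^2/(|a| - M)^2 + M*(|2*ℓ - 2*abs a| + 2*M + u)/((|a| - M)*ℓ) := by
  have h1pos : (0:ℝ) < (a - M)^2 + u := by positivity
  have h2pos : (0:ℝ) < (a + M)^2 + u := by positivity
  set r1 := Real.sqrt ((a - M)^2 + u) with hr1
  set r2 := Real.sqrt ((a + M)^2 + u) with hr2
  have hSM : 2*M < r1 + r2 := S_gt_2M hM hu
  have hd : (1:ℝ) ≤ |a| - M := by linarith
  have hd0 : (0:ℝ) < |a| - M := by linarith
  have hS2a : 2*|a| ≤ r1 + r2 := S_ge_2abs hu.le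
  have hSu : r1 + r2 ≤ 2*|a| + u/(|a| - M) := S_le_upper hM hu (by linarith)
  set S := r1 + r2 with hS
  set t := 4*M/(S - 2*M) with hts
  have hSMpos : 0 < S - 2*M := by linarith
  have ht : 0 < t := by positivity
  have hgf : gfun M a u = -Real.log (1 + t) := by
    rw [gfun, ← hr1, ← hr2, ← hS]
    have h1t : 1 + t = (S + 2*M)/(S - 2*M) := by
      rw [hts, eq_div_iff hSMpos.ne', add_mul, div_mul_cancel₀ _ hSMpos.ne']; ring
    rw [h1t, ← Real.log_inv, inv_div]
  have hlog_le : Real.log (1 + t) ≤ t := by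
    have := Real.log_le_sub_one_of_pos (show (0:ℝ) < 1 + t by linarith)
    linarith
  have hlog_ge : t - t^2 ≤ Real.log (1 + t) := by
    have h2 := Real.log_le_sub_one_of_pos (show (0:ℝ) < (1 + t)⁻¹ by positivity)
    rw [Real.log_inv] at h2
    have h3 : (1 + t)⁻¹ - 1 = -(t/(1 + t)) := by field_simp; ring
    have h4 : t - t^2 ≤ t/(1 + t) := by
      rw [le_div_iff₀ (by linarith : (0:ℝ) < 1 + t)]
      nlinarith
    rw [h3] at h2
    linarith
  have habs1 : |t - Real.log (1 + t)| ≤ t^2 :=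
    abs_le.mpr ⟨by nlinarith, by linarith⟩
  -- bound on t
  have htle : t ≤ 2*M/(|a| - M) := by
    rw [hts, div_le_div_iff₀ hSMpos hd0]
    nlinarith
  have ht2 : t^2 ≤ 4*M^2/(|a| - M)^2 := by
    have h := mul_le_mul htle htle ht.le (by positivity)
    calc t^2 = t*t := sq t
      _ ≤ (2*M/(|a| - M)) * (2*M/(|a| - M)) := h
      _ = 4*M^2/(|a| - M)^2 := by rw [div_mul_div_comm]; ring_nf
  -- bound on |2M/ℓ - t|
  have hstep5 : |2*M/ℓ - t| ≤ M*(|2*ℓ - 2*abs a| + 2*M + u)/((|a| - M)*ℓ) := by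
    have heq : 2*M/ℓ - t = (2*M*(S - 2*M - 2*ℓ))/(ℓ*(S - 2*M)) := by
      rw [hts]; field_simp; ring
    rw [heq, abs_div, abs_of_pos (mul_pos hℓ hSMpos), abs_mul]
    have h2M : |2*M| = 2*M := abs_of_pos (by linarith)
    rw [h2M]
    have hnum : |S - 2*M - 2*ℓ| ≤ |2*ℓ - 2*abs a| + 2*M + u := by
      have h5 : |S - 2*abs a| ≤ u := by
        rw [abs_of_nonneg (by linarith)]
        have : u/(|a| - M) ≤ u := by
          rw [div_le_iff₀ hd0]; nlinarith
        linarith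
      have h6l := neg_abs_le (2*ℓ - 2*|a|)
      have h6r := le_abs_self (2*ℓ - 2*|a|)
      have h5l := neg_abs_le (S - 2*|a|)
      have h5r := le_abs_self (S - 2*|a|)
      rw [abs_le]
      constructor <;> linarith
    calc 2*M*|S - 2*M - 2*ℓ| / (ℓ*(S - 2*M))
        ≤ 2*M*(|2*ℓ - 2*abs a| + 2*M + u) / (2*(|a| - M)*ℓ) := by
          have hmm : ℓ*(2*(|a| - M)) ≤ ℓ*(S - 2*M) :=
            mul_le_mul_of_nonneg_left (by linarith) hℓ.le
          apply div_le_div₀ (by positivity)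
            (mul_le_mul_of_nonneg_left hnum (by linarith)) (by positivity) (by linarith)
      _ = M*(|2*ℓ - 2*abs a| + 2*M + u)/((|a| - M)*ℓ) := by
          rw [div_eq_div_iff (by positivity) (by positivity)]; ring
  have hsplit : gfun M a u + 2*M/ℓ = (t - Real.log (1 + t)) + (2*M/ℓ - t) := by
    rw [hgf]; ring
  calc |gfun M a u + 2*M/ℓ|
      ≤ |t - Real.log (1 + t)| + |2*M/ℓ - t| := by rw [hsplit]; exact abs_add_le _ _
    _ ≤ 4*M^2/(|a| - M)^2 + M*(|2*ℓ - 2*abs a| + 2*M + u)/((|a| - M)*ℓ) :=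
        add_le_add (habs1.trans ht2) hstep5

lemma window {x nL M : ℝ} (hM : 0 < M) (h : 2*(|x| + M + 1) ≤ nL) :
    (M + 1 ≤ |x + nL|) ∧ (nL/2 ≤ |x + nL| - M) ∧ |2*nL - 2*(abs (x + nL))| ≤ 2*|x| := by
  have hx : 0 ≤ |x| := abs_nonneg x
  have hnL : 0 < nL := by linarith
  have e1 : |nL| - |(-x)| ≤ |nL - (-x)| := abs_sub_abs_le_abs_sub _ _
  rw [abs_neg, abs_of_pos hnL, sub_neg_eq_add] at e1
  have e1' : nL - |x| ≤ |x + nL| := by rw [add_comm x nL]; exact e1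
  have e2 : |x + nL| ≤ |x| + nL := by
    have := abs_add_le x nL
    rw [abs_of_pos hnL] at this; linarith
  refine ⟨by linarith, by linarith, ?_⟩
  rw [abs_le]; constructor <;> linarith

noncomputable def ggf (M L x : ℝ) (k : ℕ) (u : ℝ) : ℝ :=
  gfun M (x + ((k:ℝ)+1)*L) u + gfun M (x - ((k:ℝ)+1)*L) u + 4*M/(((k:ℝ)+1)*L)

noncomputable def ggd (M L x : ℝ) (k : ℕ) (u : ℝ) : ℝ :=
  Dfun M (x + ((k:ℝ)+1)*L) u + Dfun M (x - ((k:ℝ)+1)*L) u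

lemma ggf_hasDeriv {M L x : ℝ} (hM : 0 < M) (k : ℕ) {u : ℝ} (hu : 0 < u) :
    HasDerivAt (ggf M L x k) (ggd M L x k u) u := by
  have h1 := hasDerivAt_gfun (a := x + ((k:ℝ)+1)*L) hM hu
  have h2 := hasDerivAt_gfun (a := x - ((k:ℝ)+1)*L) hM hu
  exact ((h1.add h2).add_const _ : _)

lemma ggd_nonneg {M L x : ℝ} (hM : 0 < M) (k : ℕ) {u : ℝ} (hu : 0 < u) :
    0 ≤ ggd M L x k u :=
  add_nonneg (Dfun_nonneg hM hu) (Dfun_nonneg hM hu)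

lemma Dfun_decay' {M a u d : ℝ} (hM : 0 < M) (hu : 0 < u) (hd : 0 < d)
    (ha : d ≤ |a| - M) : Dfun M a u ≤ M / d^3 := by
  have h1 : Dfun M a u ≤ M / (|a| - M)^3 := Dfun_le_decay hM hu (by linarith)
  have h2 : M / (|a| - M)^3 ≤ M / d^3 := by gcongr <;> linarith
  linarith

lemma ggd_decay {M L x : ℝ} (hM : 0 < M) (hL : 0 < L) (k : ℕ) {u : ℝ} (hu : 0 < u)
    (hbig : 2*(|x| + M + 1) ≤ ((k:ℝ)+1)*L) :
    ggd M L x k u ≤ 16*M/((((k:ℝ)+1)*L)^3) := by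
  set nL := ((k:ℝ)+1)*L with hnL
  have hnLpos : 0 < nL := by positivity
  obtain ⟨w1, w2, -⟩ := window (x := x) hM hbig
  obtain ⟨w1', w2', -⟩ := window (x := -x) (nL := nL) hM (by rwa [abs_neg])
  have hxm : |x - nL| = |(-x) + nL| := by
    rw [show x - nL = -((-x) + nL) by ring, abs_neg]
  have d1 : Dfun M (x + nL) u ≤ M / (nL/2)^3 := Dfun_decay' hM hu (by positivity) w2
  have d2 : Dfun M (x - nL) u ≤ M / (nL/2)^3 := by
    apply Dfun_decay' hM hu (by positivity)
    rw [hxm]; exact w2'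
  have e : M/(nL/2)^3 + M/(nL/2)^3 = 16*M/(nL^3) := by
    field_simp; ring
  calc ggd M L x k u ≤ M/(nL/2)^3 + M/(nL/2)^3 := add_le_add d1 d2
    _ = 16*M/(nL^3) := e
    _ = 16*M/((((k:ℝ)+1)*L)^3) := by rw [hnL]

lemma ggd_unif {M L x : ℝ} (hM : 0 < M) (k : ℕ) {u u₁ : ℝ} (hu₁ : 0 < u₁) (hu : u₁ < u) :
    ggd M L x k u ≤ 2*(M/(u₁ * Real.sqrt u₁)) := by
  have hu0 : 0 < u := lt_trans hu₁ hu
  have hone : Dfun M (x + ((k:ℝ)+1)*L) u ≤ M/(u * Real.sqrt u) := Dfun_le_uniform hM hu0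
  have htwo : Dfun M (x - ((k:ℝ)+1)*L) u ≤ M/(u * Real.sqrt u) := Dfun_le_uniform hM hu0
  have hmon : M/(u * Real.sqrt u) ≤ M/(u₁ * Real.sqrt u₁) := by
    gcongr <;> first
      | positivity
      | exact hu.le
      | exact Real.sqrt_le_sqrt hu.le
  rw [ggd]; linarith

lemma ggf_point_bound {M L x : ℝ} (hM : 0 < M) (hL : 0 < L) (k : ℕ) {u : ℝ} (hu : 0 < u)
    (hbig : 2*(|x| + M + 1) ≤ ((k:ℝ)+1)*L) :
    |ggf M L x k u| ≤ (32*M^2 + 4*M*(2*|x| + 2*M + u))/((((k:ℝ)+1)*L)^2) := by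
  set nL := ((k:ℝ)+1)*L with hnL
  have hnLpos : 0 < nL := by positivity
  obtain ⟨w1, w2, w3⟩ := window (x := x) hM hbig
  obtain ⟨w1', w2', w3'⟩ := window (x := -x) (nL := nL) hM (by rwa [abs_neg])
  have hxm : |x - nL| = |(-x) + nL| := by
    rw [show x - nL = -((-x) + nL) by ring, abs_neg]
  have hb1 : |gfun M (x + nL) u + 2*M/nL| ≤
      4*M^2/(|x + nL| - M)^2 + M*(|2*nL - 2*(abs (x + nL))| + 2*M + u)/((|x + nL| - M)*nL) :=
    gfun_bound hM hu w1 hnLpos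
  have hb2 : |gfun M (x - nL) u + 2*M/nL| ≤
      4*M^2/(|x - nL| - M)^2 + M*(|2*nL - 2*(abs (x - nL))| + 2*M + u)/((|x - nL| - M)*nL) :=
    gfun_bound hM hu (by rw [hxm]; exact w1') hnLpos
  -- uniform simplification of each bound
  have hkey : ∀ d : ℝ, nL/2 ≤ d - M → |2*nL - 2*d| ≤ 2*|x| → M + 1 ≤ d →
      4*M^2/(d - M)^2 + M*(|2*nL - 2*d| + 2*M + u)/((d - M)*nL)
        ≤ (16*M^2 + 2*M*(2*|x| + 2*M + u))/(nL^2) := by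
    intro d hd habs hd1
    have hdM : 0 < d - M := by linarith
    have h1 : 4*M^2/(d - M)^2 ≤ 4*M^2/(nL/2)^2 := by gcongr <;> first | positivity | linarith
    have h2 : M*(|2*nL - 2*d| + 2*M + u)/((d - M)*nL) ≤
        M*(2*|x| + 2*M + u)/((nL/2)*nL) := by
      gcongr <;> first | positivity | exact habs | linarith
    have e1 : 4*M^2/(nL/2)^2 = 16*M^2/(nL^2) := by field_simp; ring
    have e2 : M*(2*|x| + 2*M + u)/((nL/2)*nL) = 2*M*(2*|x| + 2*M + u)/(nL^2) := by
      field_simp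
    have : 16*M^2/(nL^2) + 2*M*(2*|x| + 2*M + u)/(nL^2)
        = (16*M^2 + 2*M*(2*|x| + 2*M + u))/(nL^2) := by ring
    linarith
  have k1 := hkey (|x + nL|) w2 w3 w1
  have k2 : 4*M^2/(|x - nL| - M)^2 + M*(|2*nL - 2*(abs (x - nL))| + 2*M + u)/((|x - nL| - M)*nL)
      ≤ (16*M^2 + 2*M*(2*|x| + 2*M + u))/(nL^2) := by
    have := hkey (|x - nL|) (by rw [hxm]; exact w2') ?_ (by rw [hxm]; exact w1')
    · exact this
    · rw [hxm]
      have : |x| = |(-x)| := (abs_neg x).symm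
      rw [this]; exact w3'
  have hsplit : ggf M L x k u =
      (gfun M (x + nL) u + 2*M/nL) + (gfun M (x - nL) u + 2*M/nL) := by
    rw [ggf, ← hnL]; field_simp; ring
  calc |ggf M L x k u| ≤ |gfun M (x + nL) u + 2*M/nL| + |gfun M (x - nL) u + 2*M/nL| := by
        rw [hsplit]; exact abs_add_le _ _
    _ ≤ (16*M^2 + 2*M*(2*|x| + 2*M + u))/(nL^2) + (16*M^2 + 2*M*(2*|x| + 2*M + u))/(nL^2) := by
        linarith
    _ = (32*M^2 + 4*M*(2*|x| + 2*M + u))/((((k:ℝ)+1)*L)^2) := by rw [← hnL]; ring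

lemma summable_sq (c L : ℝ) (hL : 0 < L) :
    Summable (fun j : ℕ => c/((((j:ℝ)+1)*L)^2)) := by
  have h : Summable (fun n : ℕ => 1/(n:ℝ)^2) :=
    Real.summable_one_div_nat_pow.mpr (by norm_num)
  have h1 : Summable (fun j : ℕ => 1/(((j:ℝ)+1)^2)) := by
    have h2 := (summable_nat_add_iff 1).mpr h
    refine h2.congr fun n => ?_
    push_cast; ring
  refine (h1.mul_left (c/L^2)).congr fun j => ?_
  rw [div_mul_div_comm, mul_one]
  congr 1
  ring

noncomputable def bfun (M L x u₁ : ℝ) (k : ℕ) : ℝ :=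
  if 2*(|x| + M + 1) ≤ ((k:ℝ)+1)*L then 16*M/((((k:ℝ)+1)*L)^3)
  else 2*(M/(u₁ * Real.sqrt u₁))

lemma bfun_nonneg {M L x u₁ : ℝ} (hM : 0 < M) (hL : 0 < L) (hu₁ : 0 < u₁) (k : ℕ) :
    0 ≤ bfun M L x u₁ k := by
  rw [bfun]; split_ifs <;> positivity

lemma bfun_bound {M L x u₁ : ℝ} (hM : 0 < M) (hL : 0 < L) (hu₁ : 0 < u₁) {u : ℝ}
    (hu : u₁ < u) (k : ℕ) : ggd M L x k u ≤ bfun M L x u₁ k := by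
  rw [bfun]; split_ifs with h
  · exact ggd_decay hM hL k (lt_trans hu₁ hu) h
  · exact ggd_unif hM k hu₁ hu

lemma cond_shift {M L x : ℝ} (hM : 0 < M) (hL : 0 < L) (K : ℕ)
    (hK : 2*(|x| + M + 1)/L < (K:ℝ)) (j : ℕ) :
    2*(|x| + M + 1) ≤ (((j+K : ℕ):ℝ)+1)*L := by
  rw [div_lt_iff₀ hL] at hK
  have h1 : (K:ℝ) ≤ ((j+K : ℕ):ℝ)+1 := by push_cast; linarith [Nat.cast_nonneg (α := ℝ) j]
  nlinarith [Nat.cast_nonneg (α := ℝ) j]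

lemma bfun_summable {M L x u₁ : ℝ} (hM : 0 < M) (hL : 0 < L) (hu₁ : 0 < u₁) :
    Summable (bfun M L x u₁) := by
  obtain ⟨K, hK⟩ := exists_nat_gt (2*(|x| + M + 1)/L)
  rw [← summable_nat_add_iff K]
  apply Summable.of_nonneg_of_le (fun j => bfun_nonneg hM hL hu₁ _)
    (fun j => ?_) (summable_sq (16*M/L) L hL)
  have hcond := cond_shift hM hL K hK j
  rw [bfun, if_pos hcond]
  have hjle : ((j:ℝ)+1)*L ≤ (((j+K:ℕ):ℝ)+1)*L := by
    have : ((j:ℝ)+1) ≤ ((j+K:ℕ):ℝ)+1 := by push_cast; linarith [Nat.cast_nonneg (α := ℝ) K]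
    nlinarith
  have hjp : 0 < ((j:ℝ)+1)*L := by positivity
  have h1 : 16*M/(((((j+K:ℕ):ℝ)+1)*L)^3) ≤ 16*M/((((j:ℝ)+1)*L)^3) := by
    gcongr <;> first | positivity | linarith
  have h2 : 16*M/((((j:ℝ)+1)*L)^3) ≤ (16*M/L)/((((j:ℝ)+1)*L)^2) := by
    rw [div_le_div_iff₀ (by positivity) (by positivity)]
    have e : (((j:ℝ)+1)*L)^3 = (((j:ℝ)+1)*L)^2 * (((j:ℝ)+1)*L) := by ring
    have hLle : L ≤ ((j:ℝ)+1)*L := by nlinarith [Nat.cast_nonneg (α := ℝ) j]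
    have hp2 : 0 < (((j:ℝ)+1)*L)^2 := by positivity
    calc 16*M/L * (((j:ℝ)+1)*L)^3 = 16*M/L * ((((j:ℝ)+1)*L)^2 * (((j:ℝ)+1)*L)) := by rw [e]
      _ ≥ 16*M/L * ((((j:ℝ)+1)*L)^2 * L) := by
          apply mul_le_mul_of_nonneg_left _ (by positivity)
          exact mul_le_mul_of_nonneg_left hLle hp2.le
      _ = 16*M * (((j:ℝ)+1)*L)^2 := by field_simp
  linarith

lemma ggf_summable {M L x : ℝ} (hM : 0 < M) (hL : 0 < L) {u : ℝ} (hu : 0 < u) :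
    Summable (fun k => ggf M L x k u) := by
  obtain ⟨K, hK⟩ := exists_nat_gt (2*(|x| + M + 1)/L)
  rw [← summable_nat_add_iff K]
  set C := 32*M^2 + 4*M*(2*|x| + 2*M + u) with hC
  have hC0 : 0 < C := by positivity
  apply Summable.of_norm_bounded (summable_sq C L hL)
  intro j
  have hcond := cond_shift hM hL K hK j
  rw [Real.norm_eq_abs]
  have h1 := ggf_point_bound hM hL (j+K) hu hcond
  have hjle : ((j:ℝ)+1)*L ≤ (((j+K:ℕ):ℝ)+1)*L := by
    have : ((j:ℝ)+1) ≤ ((j+K:ℕ):ℝ)+1 := by push_cast; linarith [Nat.cast_nonneg (α := ℝ) K]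
    nlinarith
  have h2 : C/(((((j+K:ℕ):ℝ)+1)*L)^2) ≤ C/((((j:ℝ)+1)*L)^2) := by
    gcongr <;> first | positivity | linarith
  calc |ggf M L x (j+K) u| ≤ C/(((((j+K:ℕ):ℝ)+1)*L)^2) := h1
    _ ≤ C/((((j:ℝ)+1)*L)^2) := h2



/-- For `M > 0`, `L > 2M` and `ρ > 0`, the derivative of the logarithm `ω` of
the periodic Schwarzschild Ernst potential with respect to `ρ²` is given by the convergent
series `∑_{n∈ℤ} 2M(s₁+s₂)/([s₁+s₂+2M][s₁+s₂−2M] s₁ s₂)` with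
`s₁(n) = √((x+nL+M)²+ρ²)`, `s₂(n) = √((x+nL−M)²+ρ²)`; equivalently `∂ω/∂ρ` is `2ρ` times
this sum. -/
theorem statement8 (M L : ℝ) (hM : 0 < M) (hL : 2*M < L) (x ρ : ℝ) (hρ : 0 < ρ)
    (s₁ s₂ : ℤ → ℝ)
    (hs₁ : ∀ n : ℤ, s₁ n = Real.sqrt ((x + n * L + M)^2 + ρ^2))
    (hs₂ : ∀ n : ℤ, s₂ n = Real.sqrt ((x + n * L - M)^2 + ρ^2))
    (F : ℤ → ℝ)
    (hF : ∀ n : ℤ, F n = 2*M * (s₁ n + s₂ n) /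
      ((s₁ n + s₂ n + 2*M) * (s₁ n + s₂ n - 2*M) * s₁ n * s₂ n)) :
    Summable F ∧
    HasDerivAt (fun u : ℝ => perOmega M L x (Real.sqrt u)) (∑' n : ℤ, F n) (ρ^2) ∧
    HasDerivAt (fun t : ℝ => perOmega M L x t) (2 * ρ * ∑' n : ℤ, F n) ρ := by
  have hL0 : 0 < L := by linarith
  have hu0 : (0:ℝ) < ρ^2 := by positivity
  set u₁ : ℝ := ρ^2/2 with hu₁def
  have hu₁ : 0 < u₁ := by positivity
  have hmemρ : ρ^2 ∈ Set.Ioi u₁ := by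
    rw [Set.mem_Ioi, hu₁def]; linarith
  have huρ : u₁ < ρ^2 := hmemρ
  -- term-by-term differentiation of the series
  have hderiv : ∀ (k : ℕ) (v : ℝ), v ∈ Set.Ioi u₁ → HasDerivAt (ggf M L x k) (ggd M L x k v) v :=
    fun k v hv => ggf_hasDeriv hM k (lt_trans hu₁ hv)
  have hbound : ∀ (k : ℕ) (v : ℝ), v ∈ Set.Ioi u₁ → ‖ggd M L x k v‖ ≤ bfun M L x u₁ k := by
    intro k v hv
    rw [Real.norm_eq_abs, abs_of_nonneg (ggd_nonneg hM k (lt_trans hu₁ hv))]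
    exact bfun_bound hM hL0 hu₁ hv k
  have hsum0 : Summable (fun k => ggf M L x k (ρ^2)) := ggf_summable hM hL0 hu0
  have hmain : HasDerivAt (fun v => ∑' k, ggf M L x k v) (∑' k, ggd M L x k (ρ^2)) (ρ^2) :=
    hasDerivAt_tsum_of_isPreconnected (bfun_summable hM hL0 hu₁) isOpen_Ioi
      (convex_Ioi u₁).isPreconnected hderiv hbound hmemρ hsum0 hmemρ
  have h0 : HasDerivAt (fun v => gfun M x v) (Dfun M x (ρ^2)) (ρ^2) := hasDerivAt_gfun hM hu0
  have htot := h0.add hmain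
  -- identify the function with perOmega ∘ sqrt near ρ²
  have hEqpt : ∀ v : ℝ, 0 < v → perOmega M L x (Real.sqrt v) = gfun M x v + ∑' k, ggf M L x k v := by
    intro v hv
    have hsq : Real.sqrt v ^ 2 = v := Real.sq_sqrt hv.le
    rw [perOmega]
    congr 1
    · rw [schwOmega, schwE, gfun, hsq]
    · apply tsum_congr; intro k
      rw [ggf, schwOmega, schwOmega, schwE, schwE, gfun, gfun, hsq]
  have hEv : (fun v : ℝ => perOmega M L x (Real.sqrt v)) =ᶠ[nhds (ρ^2)]
      (fun v => gfun M x v + ∑' k, ggf M L x k v) := by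
    filter_upwards [Ioi_mem_nhds hu0] with v hv using hEqpt v hv
  have hDer2 : HasDerivAt (fun v : ℝ => perOmega M L x (Real.sqrt v))
      (Dfun M x (ρ^2) + ∑' k, ggd M L x k (ρ^2)) (ρ^2) := htot.congr_of_eventuallyEq hEv
  -- identify F with Dfun
  have hFD : ∀ n : ℤ, F n = Dfun M (x + (n:ℝ)*L) (ρ^2) := by
    intro n
    rw [hF n, hs₁ n, hs₂ n, Dfun]
    ring
  have hcompp : ∀ k : ℕ, F ((k:ℤ)+1) = Dfun M (x + ((k:ℝ)+1)*L) (ρ^2) := by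
    intro k
    rw [hFD]
    norm_num
  have hcompm : ∀ k : ℕ, F (-((k:ℤ)+1)) = Dfun M (x - ((k:ℝ)+1)*L) (ρ^2) := by
    intro k
    rw [hFD]
    push_cast
    rw [show x + -((k:ℝ)+1)*L = x - ((k:ℝ)+1)*L by ring]
  -- summability of the two halves
  have hb := bfun_summable (x := x) hM hL0 hu₁
  have hSp : Summable (fun k : ℕ => F ((k:ℤ)+1)) := by
    apply Summable.of_nonneg_of_le (fun k => ?_) (fun k => ?_) hb
    · rw [hcompp]; exact Dfun_nonneg hM hu0
    · rw [hcompp]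
      have h2 := bfun_bound (x := x) hM hL0 hu₁ huρ k
      have h3 : Dfun M (x + ((k:ℝ)+1)*L) (ρ^2) ≤ ggd M L x k (ρ^2) := by
        rw [ggd]; linarith [Dfun_nonneg (a := x - ((k:ℝ)+1)*L) (u := ρ^2) hM hu0]
      linarith
  have hSm : Summable (fun k : ℕ => F (-((k:ℤ)+1))) := by
    apply Summable.of_nonneg_of_le (fun k => ?_) (fun k => ?_) hb
    · rw [hcompm]; exact Dfun_nonneg hM hu0
    · rw [hcompm]
      have h2 := bfun_bound (x := x) hM hL0 hu₁ huρ k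
      have h3 : Dfun M (x - ((k:ℝ)+1)*L) (ρ^2) ≤ ggd M L x k (ρ^2) := by
        rw [ggd]; linarith [Dfun_nonneg (a := x + ((k:ℝ)+1)*L) (u := ρ^2) hM hu0]
      linarith
  have hSnat : Summable (fun n : ℕ => F (n:ℤ)) := by
    rw [← summable_nat_add_iff 1]
    refine hSp.congr fun n => ?_
    norm_cast
  have hSm' : Summable (fun n : ℕ => F (-((n:ℤ)+1))) := hSm
  have hSF : Summable F := Summable.of_nat_of_neg_add_one hSnat hSm'
  -- value of the ℤ-sum
  have hval : ∑' n : ℤ, F n = Dfun M x (ρ^2) + ∑' k, ggd M L x k (ρ^2) := by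
    rw [tsum_of_nat_of_neg_add_one hSnat hSm']
    rw [hSnat.tsum_eq_zero_add]
    have hF0 : F ((0:ℕ):ℤ) = Dfun M x (ρ^2) := by
      rw [hFD]; norm_num
    have hshift : ∑' n : ℕ, F ((n+1 : ℕ):ℤ) = ∑' k : ℕ, F ((k:ℤ)+1) := by
      apply tsum_congr; intro n; norm_cast
    rw [hF0, hshift, add_assoc]
    congr 1
    rw [← hSp.tsum_add hSm]
    apply tsum_congr; intro k
    rw [hcompp, hcompm, ggd]
  have hDer2F : HasDerivAt (fun v : ℝ => perOmega M L x (Real.sqrt v)) (∑' n : ℤ, F n) (ρ^2) := by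
    rw [hval]; exact hDer2
  refine ⟨hSF, hDer2F, ?_⟩
  -- chain rule for the ρ-derivative
  have hsq : HasDerivAt (fun t : ℝ => t^2) (2*ρ) ρ := by
    simpa using hasDerivAt_pow 2 ρ
  have hcomp : HasDerivAt ((fun v : ℝ => perOmega M L x (Real.sqrt v)) ∘ fun t : ℝ => t^2)
      ((∑' n : ℤ, F n) * (2*ρ)) ρ := HasDerivAt.comp ρ hDer2F hsq
  have hEv3 : (fun t : ℝ => perOmega M L x t) =ᶠ[nhds ρ]
      ((fun v : ℝ => perOmega M L x (Real.sqrt v)) ∘ fun t : ℝ => t^2) := by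
    filter_upwards [Ioi_mem_nhds hρ] with t ht
    simp only [Function.comp_apply]
    rw [Real.sqrt_sq (le_of_lt ht)]
  have hfin := hcomp.congr_of_eventuallyEq hEv3
  rw [mul_comm]
  exact hfin
end

section
/- Fix M > 0 and L > 2M, and let x be real with M < x ≤ L/2. Then ((x−M)/(x+M)) · ∏_{n=1}^∞ [ (x+nL−M)(nL−x−M) / ( (x+nL+M)(nL−x+M) ) ] · exp(4M/(nL)) = exp(4γM/L) · Γ((x+M)/L) Γ(1 − (x−M)/L) / ( Γ((x−M)/L) Γ(1 − (x+M)/L) ), where γ is the Euler–Mascheroni constant and Γ is the Gamma function. Equivalently, the periodic Schwarzschild Ernst potential on the symmetry axis ρ = 0 is given by this Gamma-function expression for M ≤ |x| ≤ L/2. -/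
open Filter Real Finset Topology Asymptotics
open scoped Nat

/-!
Put `a = (x + M) / L` and `b = (x - M) / L`, so that `0 < b < a < 1`. The `n`-th factor of the
product is `W_b W_{-a} / (W_a W_{-b})`, where `W_z(n) = (1 + z/(n+1)) e^{-z/(n+1)}` are the factors
of Weierstrass' product `∏ W_z(n) = e^{-γz} / Γ(z+1)`. This product converges because
`log W_z(n) = O(1/n²)`, and its value follows from Euler's limit `n^s n! / (s (s+1) ⋯ (s+n)) → Γ(s)`
together with `H_N - log N → γ`. Finally the prefactor `(x - M)/(x + M) = b/a` turns
`Γ(a+1)/Γ(b+1)` into `Γ(a)/Γ(b)`.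
-/

lemma Real.isBigO_log_one_add_sub_self :
    (fun t : ℝ ↦ log (1 + t) - t) =O[𝓝 0] fun t ↦ t ^ 2 := by
  refine IsBigO.of_bound 2 ?_
  filter_upwards [eventually_abs_sub_lt 0 (show (0 : ℝ) < 1 / 2 by norm_num)] with t ht
  rw [sub_zero] at ht
  have h := abs_log_sub_add_sum_range_le (x := -t) (by rw [abs_neg]; linarith) 1
  norm_num only [range_one, sum_singleton, abs_neg, sub_neg_eq_add, pow_one, div_one] at h
  rw [Real.norm_eq_abs, Real.norm_eq_abs, abs_pow, sq_abs, sub_eq_neg_add]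
  calc |-t + log (1 + t)| ≤ |t| ^ 2 / (1 - |t|) := h
    _ ≤ 2 * t ^ 2 := by
        rw [div_le_iff₀ (by linarith), sq_abs]
        nlinarith [sq_nonneg t]

noncomputable def weierstrassFactor (z : ℝ) (n : ℕ) : ℝ :=
  (1 + z / (n + 1)) * exp (-(z / (n + 1)))

lemma one_add_div_natCast_add_one_pos {z : ℝ} (hz : -1 < z) (n : ℕ) : 0 < 1 + z / (n + 1) := by
  have : -1 < z / (n + 1) := by
    rw [lt_div_iff₀ (by positivity)]
    linarith [(n.cast_nonneg : (0 : ℝ) ≤ n)]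
  linarith

lemma weierstrassFactor_pos {z : ℝ} (hz : -1 < z) (n : ℕ) : 0 < weierstrassFactor z n :=
  mul_pos (one_add_div_natCast_add_one_pos hz n) (exp_pos _)

lemma summable_log_weierstrassFactor {z : ℝ} (hz : -1 < z) :
    Summable fun n ↦ log (weierstrassFactor z n) := by
  have hlog (n : ℕ) : log (weierstrassFactor z n) = log (1 + z / (n + 1)) - z / (n + 1) := by
    rw [weierstrassFactor, log_mul (one_add_div_natCast_add_one_pos hz n).ne' (exp_ne_zero _),
      log_exp, sub_eq_add_neg]
  have hsq : Summable fun n : ℕ ↦ (z / (n + 1)) ^ 2 := by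
    have := (summable_nat_add_iff 1).mpr
      (Real.summable_one_div_nat_pow.mpr one_lt_two) |>.mul_left (z ^ 2)
    simpa [div_pow, div_eq_mul_inv, mul_pow] using this
  have ht : Tendsto (fun n : ℕ ↦ z / (n + 1)) atTop (𝓝 0) := by
    simpa [div_eq_mul_inv] using tendsto_one_div_add_atTop_nhds_zero_nat.const_mul z
  simp_rw [hlog]
  exact summable_of_isBigO_nat hsq (isBigO_log_one_add_sub_self.comp_tendsto ht)

lemma prod_range_one_add_div_mul_factorial (z : ℝ) (N : ℕ) :
    (∏ n ∈ range N, (1 + z / (n + 1))) * N ! = ∏ n ∈ range N, (z + 1 + n) := by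
  rw [← prod_range_add_one_eq_factorial, Nat.cast_prod, ← prod_mul_distrib]
  refine prod_congr rfl fun n _ ↦ ?_
  push_cast
  field_simp
  ring

lemma GammaSeq_add_one_mul_prod_range {z : ℝ} (hz : -1 < z) (N : ℕ) :
    GammaSeq (z + 1) N * ((∏ n ∈ range N, (1 + z / (n + 1))) * (N + 1 + z)) = N ^ (z + 1) := by
  have hP : 0 < ∏ n ∈ range N, (1 + z / (n + 1)) :=
    prod_pos fun n _ ↦ one_add_div_natCast_add_one_pos hz n
  have hN : (0 : ℝ) < N + 1 + z := by linarith [(N.cast_nonneg : (0 : ℝ) ≤ N)]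
  rw [GammaSeq, prod_range_succ, ← prod_range_one_add_div_mul_factorial]
  generalize ∏ n ∈ range N, (1 + z / (n + 1)) = P at hP ⊢
  rw [show z + 1 + (N : ℝ) = N + 1 + z by ring]
  have := N.factorial_pos
  field_simp

lemma prod_range_weierstrassFactor (z : ℝ) (N : ℕ) :
    ∏ n ∈ range N, weierstrassFactor z n
      = (∏ n ∈ range N, (1 + z / (n + 1))) * exp (-(z * harmonic N)) := by
  simp only [weierstrassFactor, prod_mul_distrib, ← exp_sum, harmonic]
  push_cast
  rw [mul_sum, ← sum_neg_distrib]
  simp only [div_eq_mul_inv]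

lemma tendsto_prod_range_weierstrassFactor {z : ℝ} (hz : -1 < z) :
    Tendsto (fun N ↦ ∏ n ∈ range N, weierstrassFactor z n) atTop
      (𝓝 (exp (-(eulerMascheroniConstant * z)) / Gamma (z + 1))) := by
  have hlim : Tendsto (fun N : ℕ ↦ N / (N + (1 + z)) * exp (-(z * (harmonic N - log N)))
      / GammaSeq (z + 1) N) atTop (𝓝 (1 * exp (-(z * eulerMascheroniConstant)) / Gamma (z + 1))) :=
    ((tendsto_natCast_div_add_atTop (1 + z)).mul
      ((tendsto_harmonic_sub_log.const_mul z).neg.rexp)).div (GammaSeq_tendsto_Gamma _)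
      (Gamma_pos_of_pos (by linarith)).ne'
  rw [one_mul, mul_comm] at hlim
  refine hlim.congr' ?_
  filter_upwards [eventually_ne_atTop 0] with N hN0
  have hN : (0 : ℝ) < N := by positivity
  have hG := GammaSeq_add_one_mul_prod_range hz N
  rw [rpow_add_one hN.ne', rpow_def_of_pos hN] at hG
  have hΓ : GammaSeq (z + 1) N ≠ 0 := by
    refine left_ne_zero_of_mul (b := (∏ n ∈ range N, (1 + z / (n + 1))) * (N + 1 + z)) ?_
    rw [hG]
    positivity
  have hexp : exp (-(z * (harmonic N - log N))) = exp (-(z * harmonic N)) * exp (log N * z) := by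
    rw [← exp_add]; ring_nf
  have hNz : (N : ℝ) + (1 + z) ≠ 0 := by linarith
  rw [prod_range_weierstrassFactor, div_eq_iff hΓ, hexp, div_mul_eq_mul_div, div_eq_iff hNz]
  linear_combination -exp (-(z * harmonic N)) * hG

theorem hasProd_weierstrassFactor {z : ℝ} (hz : -1 < z) :
    HasProd (weierstrassFactor z) (exp (-(eulerMascheroniConstant * z)) / Gamma (z + 1)) := by
  have hm := Real.multipliable_of_summable_log (weierstrassFactor_pos hz)
    (summable_log_weierstrassFactor hz)
  rw [← tendsto_nhds_unique hm.hasProd.tendsto_prod_nat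
    (tendsto_prod_range_weierstrassFactor hz)]
  exact hm.hasProd

theorem hasProd_weierstrassFactor_ratio {a b : ℝ} (ha0 : 0 < a) (ha1 : a < 1) (hb0 : 0 < b)
    (hb1 : b < 1) :
    HasProd (fun n ↦ weierstrassFactor b n * weierstrassFactor (-a) n /
        (weierstrassFactor a n * weierstrassFactor (-b) n))
      (a / b * exp (2 * eulerMascheroniConstant * (a - b)) *
        (Gamma a * Gamma (1 - b)) / (Gamma b * Gamma (1 - a))) := by
  have := Gamma_pos_of_pos ha0
  have := Gamma_pos_of_pos hb0
  have := Gamma_pos_of_pos (sub_pos.mpr ha1)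
  have := Gamma_pos_of_pos (sub_pos.mpr hb1)
  have hW := ((hasProd_weierstrassFactor (z := b) (by linarith)).mul
    (hasProd_weierstrassFactor (z := -a) (by linarith))).div₀
    ((hasProd_weierstrassFactor (z := a) (by linarith)).mul
      (hasProd_weierstrassFactor (z := -b) (by linarith)))
    (by rw [Gamma_add_one ha0.ne', neg_add_eq_sub]; positivity)
  refine (congrArg (HasProd _) ?_).mp hW
  rw [Gamma_add_one ha0.ne', Gamma_add_one hb0.ne', neg_add_eq_sub, neg_add_eq_sub,
    show 2 * eulerMascheroniConstant * (a - b) = -(eulerMascheroniConstant * b) +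
      -(eulerMascheroniConstant * -a) - -(eulerMascheroniConstant * a) -
      -(eulerMascheroniConstant * -b) by ring, exp_sub, exp_sub, exp_add]
  field_simp

lemma ernst_axis_factor_eq_weierstrassFactor_ratio {M L x : ℝ} (hL : L ≠ 0) (n : ℕ) :
    (x + ((n : ℝ) + 1) * L - M) * (((n : ℝ) + 1) * L - x - M) /
        ((x + ((n : ℝ) + 1) * L + M) * (((n : ℝ) + 1) * L - x + M)) *
        exp (4 * M / (((n : ℝ) + 1) * L))
      = weierstrassFactor ((x - M) / L) n * weierstrassFactor (-((x + M) / L)) n /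
        (weierstrassFactor ((x + M) / L) n * weierstrassFactor (-((x - M) / L)) n) := by
  have hm : ((n : ℝ) + 1) * L ≠ 0 := by positivity
  have hexp : exp (4 * M / ((n + 1) * L)) = exp (-((x - M) / L / (n + 1))) *
      exp (-(-((x + M) / L) / (n + 1))) /
      (exp (-((x + M) / L / (n + 1))) * exp (-(-((x - M) / L) / (n + 1)))) := by
    rw [← exp_add, ← exp_add, ← exp_sub]
    congr 1
    field_simp
    ring
  rw [hexp]
  simp only [weierstrassFactor]
  field_simp
  ring

/-- For `M > 0`, `L > 2M` and `M < x ≤ L/2`, the value of the periodic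
Schwarzschild Ernst potential on the symmetry axis `ρ = 0` is given by Gamma functions:
`((x−M)/(x+M)) ∏_{n=1}^∞ [(x+nL−M)(nL−x−M)/((x+nL+M)(nL−x+M))] exp(4M/(nL))
 = exp(4γM/L) Γ((x+M)/L) Γ(1−(x−M)/L) / (Γ((x−M)/L) Γ(1−(x+M)/L))`,
where `γ` is the Euler–Mascheroni constant. -/
theorem statement11 (M L : ℝ) (hM : 0 < M) (hL : 2*M < L) (x : ℝ)
    (hx1 : M < x) (hx2 : x ≤ L/2) :
    ((x - M)/(x + M)) * ∏' n : ℕ,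
      ((x + ((n : ℝ) + 1) * L - M) * (((n : ℝ) + 1) * L - x - M) /
        ((x + ((n : ℝ) + 1) * L + M) * (((n : ℝ) + 1) * L - x + M)) *
        Real.exp (4*M / (((n : ℝ) + 1) * L)))
    = Real.exp (4 * Real.eulerMascheroniConstant * M / L) *
      (Real.Gamma ((x + M)/L) * Real.Gamma (1 - (x - M)/L)) /
      (Real.Gamma ((x - M)/L) * Real.Gamma (1 - (x + M)/L)) := by
  have hL0 : 0 < L := by linarith
  have hsub : x - M ≠ 0 := by linarith
  have hadd : x + M ≠ 0 := by linarith
  have hW := hasProd_weierstrassFactor_ratio (a := (x + M) / L) (b := (x - M) / L)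
    (div_pos (by linarith) hL0) (by rw [div_lt_one hL0]; linarith)
    (div_pos (by linarith) hL0) (by rw [div_lt_one hL0]; linarith)
  rw [funext (ernst_axis_factor_eq_weierstrassFactor_ratio hL0.ne'), hW.tprod_eq,
    show 2 * eulerMascheroniConstant * ((x + M) / L - (x - M) / L)
      = 4 * eulerMascheroniConstant * M / L by ring]
  field_simp
end

section
/- Fix M > 0 and L > 0, and let λ ∈ ℂ be such that λ + nL ≠ 0 for all n ∈ ℤ. Then ((λ−M)(λ+M)/λ²) · ∏_{n=1}^∞ [ ((λ+nL)² − M²)((λ−nL)² − M²) / ( (λ+nL)² (λ−nL)² ) ] = sin(π(λ−M)/L) sin(π(λ+M)/L) / sin²(πλ/L), with the infinite product converging. Consequently the monodromy matrix of the periodic Schwarzschild solution, obtained as the product ∏_{n∈ℤ} T₀(λ+nL) of the shifted Schwarzschild monodromy matrices T₀(λ) = −((λ−M)(λ+M)/λ²) σ₃, equals T(λ) = −( sin(π(λ−M)/L) sin(π(λ+M)/L) / sin²(πλ/L) ) σ₃, where σ₃ is the diagonal Pauli matrix diag(1,−1). -/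
/-!
With `a = (λ - M)/L`, `b = (λ + M)/L`, `z = λ/L` and `k = n + 1`, the `n`-th factor of the product
is `(1 - a²/k²)(1 - b²/k²)/(1 - z²/k²)²`, so the infinite product is a quotient of three Euler
sine products; the one for `z` is nonzero because `λ + nL ≠ 0` means `z ∉ ℤ`, and the prefactor
`(λ - M)(λ + M)/λ² = ab/z²` supplies the missing factors `πa`, `πb`, `(πz)²`. On the matrix side,
`σ₃² = 1` turns `T₀(λ + kL) T₀(λ - kL)` into a scalar, so the matrix product is scalar as well.
-/

open scoped Matrix

/-- The diagonal Pauli matrix `σ₃ = diag(1, −1)`. -/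
noncomputable def pauli3 : Matrix (Fin 2) (Fin 2) ℂ := !![1, 0; 0, -1]

/-- The monodromy matrix of the Schwarzschild solution with mass `M`:
`T₀(λ) = −((λ−M)(λ+M)/λ²) σ₃`. -/
noncomputable def schwT (M : ℝ) (lam : ℂ) : Matrix (Fin 2) (Fin 2) ℂ :=
  (-((lam - (M : ℂ)) * (lam + (M : ℂ)) / lam^2)) • pauli3

open Filter Topology Real Complex

lemma mul_tprod_one_add_sineTerm (x : ℂ) :
    π * x * ∏' i, (1 + sineTerm x i) = Complex.sin (π * x) :=
  tendsto_nhds_unique ((multipliable_sineTerm x).hasProd.tendsto_prod_nat.const_mul _) <| by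
    simpa only [sineTerm, neg_div, ← sub_eq_add_neg] using tendsto_euler_sin_prod x

lemma tprod_one_add_sineTerm_ne_zero {x : ℂ} (hx : x ∈ integerComplement) :
    ∏' i, (1 + sineTerm x i) ≠ 0 := by
  intro h
  apply sin_pi_mul_ne_zero hx
  rw [← mul_tprod_one_add_sineTerm, h, mul_zero]

lemma div_mem_integerComplement {lam L : ℂ} (hL : L ≠ 0) (hlam : ∀ n : ℤ, lam + n * L ≠ 0) :
    lam / L ∈ integerComplement := by
  rintro ⟨n, hn⟩
  apply hlam (-n)
  rw [(div_eq_iff hL).mp hn.symm]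
  push_cast
  ring

/-- `T₀(λ + kL) T₀(λ − kL)`, with `k = n + 1`, is this scalar times the identity. -/
noncomputable def periodicPairFactor (M L lam : ℂ) (n : ℕ) : ℂ :=
  ((lam + ((n : ℂ) + 1) * L)^2 - M^2) * ((lam - ((n : ℂ) + 1) * L)^2 - M^2) /
    ((lam + ((n : ℂ) + 1) * L)^2 * (lam - ((n : ℂ) + 1) * L)^2)

section PeriodicProduct

variable {M L lam : ℂ}

lemma periodicPairFactor_eq (hL : L ≠ 0) (hlam : ∀ n : ℤ, lam + n * L ≠ 0) (n : ℕ) :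
    periodicPairFactor M L lam n =
      (1 + sineTerm ((lam - M) / L) n) * (1 + sineTerm ((lam + M) / L) n) /
        (1 + sineTerm (lam / L) n)^2 := by
  have hplus : lam + ((n : ℂ) + 1) * L ≠ 0 := by exact_mod_cast hlam (n + 1)
  have hminus : lam - ((n : ℂ) + 1) * L ≠ 0 := fun h => hlam (-(n + 1)) <| by
    push_cast
    linear_combination h
  rw [periodicPairFactor, div_eq_div_iff (by positivity)
    (pow_ne_zero 2 (sineTerm_ne_zero (div_mem_integerComplement hL hlam) n))]
  simp only [sineTerm]
  field_simp
  ring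

lemma hasProd_periodicPairFactor (hL : L ≠ 0) (hlam : ∀ n : ℤ, lam + n * L ≠ 0) :
    HasProd (periodicPairFactor M L lam)
      ((∏' i, (1 + sineTerm ((lam - M) / L) i)) * (∏' i, (1 + sineTerm ((lam + M) / L) i)) /
        (∏' i, (1 + sineTerm (lam / L) i))^2) := by
  rw [funext (periodicPairFactor_eq hL hlam)]
  exact ((multipliable_sineTerm _).hasProd.mul (multipliable_sineTerm _).hasProd).div₀
    ((multipliable_sineTerm _).hasProd.pow 2)
    (pow_ne_zero 2 (tprod_one_add_sineTerm_ne_zero (div_mem_integerComplement hL hlam)))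

lemma mul_tprod_periodicPairFactor (hL : L ≠ 0) (hlam : ∀ n : ℤ, lam + n * L ≠ 0) :
    (lam - M) * (lam + M) / lam^2 * ∏' n, periodicPairFactor M L lam n =
      Complex.sin (π * (lam - M) / L) * Complex.sin (π * (lam + M) / L) /
        Complex.sin (π * lam / L)^2 := by
  have hlam0 : lam ≠ 0 := by simpa using hlam 0
  have hprod := tprod_one_add_sineTerm_ne_zero (div_mem_integerComplement hL hlam)
  have hπ : (π : ℂ) ≠ 0 := ofReal_ne_zero.mpr pi_ne_zero
  simp only [(hasProd_periodicPairFactor hL hlam).tprod_eq, mul_div_assoc _ _ L,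
    ← mul_tprod_one_add_sineTerm]
  field_simp

end PeriodicProduct

lemma pauli3_mul_self : pauli3 * pauli3 = 1 := by
  rw [pauli3, Matrix.mul_fin_two, Matrix.one_fin_two]
  norm_num

lemma schwT_mul_schwT (M : ℝ) (x y : ℂ) :
    schwT M x * schwT M y =
      algebraMap ℂ _ ((x^2 - M^2) / x^2 * ((y^2 - M^2) / y^2)) := by
  rw [schwT, schwT, Matrix.smul_mul, Matrix.mul_smul, pauli3_mul_self, smul_smul,
    Algebra.algebraMap_eq_smul_one]
  ring_nf

lemma schwT_mul_list_prod_schwT_mul_schwT (M L : ℝ) (lam : ℂ) (N : ℕ) :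
    schwT M lam * ((List.range N).map fun n : ℕ =>
        schwT M (lam + ((n : ℂ) + 1) * L) * schwT M (lam - ((n : ℂ) + 1) * L)).prod =
      (-((lam - M) * (lam + M) / lam^2 * ∏ j ∈ Finset.range N, periodicPairFactor M L lam j)) •
        pauli3 := by
  have hpair (n : ℕ) : schwT M (lam + ((n : ℂ) + 1) * L) * schwT M (lam - ((n : ℂ) + 1) * L) =
      algebraMap ℂ _ (periodicPairFactor M L lam n) := by
    rw [schwT_mul_schwT, periodicPairFactor, div_mul_div_comm]
  have hlist : ((List.range N).map fun n => algebraMap ℂ (Matrix (Fin 2) (Fin 2) ℂ)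
      (periodicPairFactor M L lam n)).prod =
        algebraMap ℂ _ (∏ j ∈ Finset.range N, periodicPairFactor M L lam j) := by
    rw [Finset.prod_eq_multiset_prod, Finset.range_val, Multiset.range, Multiset.map_coe,
      Multiset.prod_coe, map_list_prod, List.map_map]
    rfl
  rw [funext hpair, hlist, schwT, Algebra.algebraMap_eq_smul_one, Matrix.smul_mul,
    Matrix.mul_smul, mul_one, smul_smul, neg_mul]

theorem statement12_general (M L : ℝ) (hL : 0 < L) (lam : ℂ)
    (hlam : ∀ n : ℤ, lam + (n : ℂ) * (L : ℂ) ≠ 0) :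
    Multipliable (fun n : ℕ =>
      ((lam + ((n : ℂ) + 1) * L)^2 - (M : ℂ)^2) * ((lam - ((n : ℂ) + 1) * L)^2 - (M : ℂ)^2) /
        ((lam + ((n : ℂ) + 1) * L)^2 * (lam - ((n : ℂ) + 1) * L)^2)) ∧
    ((lam - (M : ℂ)) * (lam + (M : ℂ)) / lam^2) * ∏' n : ℕ,
      (((lam + ((n : ℂ) + 1) * L)^2 - (M : ℂ)^2) * ((lam - ((n : ℂ) + 1) * L)^2 - (M : ℂ)^2) /
        ((lam + ((n : ℂ) + 1) * L)^2 * (lam - ((n : ℂ) + 1) * L)^2))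
      = Complex.sin ((Real.pi : ℂ) * (lam - M) / L) * Complex.sin ((Real.pi : ℂ) * (lam + M) / L) /
          (Complex.sin ((Real.pi : ℂ) * lam / L))^2 ∧
    Filter.Tendsto
      (fun N : ℕ => schwT M lam *
        ((List.range N).map (fun n =>
          schwT M (lam + ((n : ℂ) + 1) * L) * schwT M (lam - ((n : ℂ) + 1) * L))).prod)
      Filter.atTop
      (nhds ((-(Complex.sin ((Real.pi : ℂ) * (lam - M) / L) *
          Complex.sin ((Real.pi : ℂ) * (lam + M) / L) /
          (Complex.sin ((Real.pi : ℂ) * lam / L))^2)) • pauli3)) := by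
  have hL' : (L : ℂ) ≠ 0 := ofReal_ne_zero.mpr hL.ne'
  have hmult := (hasProd_periodicPairFactor (M := M) hL' hlam).multipliable
  have hvalue := mul_tprod_periodicPairFactor (M := M) hL' hlam
  refine ⟨hmult, hvalue, ?_⟩
  rw [← hvalue]
  refine ((hmult.hasProd.tendsto_prod_nat.const_mul _).neg.smul_const pauli3).congr fun N => ?_
  -- the cast `(n : ℂ)` made Lean read `List.range N` as a monadic lift to `List ℂ`
  simp only [bind_pure_comp, List.map_eq_map, List.map_map, Function.comp_def]
  rw [schwT_mul_list_prod_schwT_mul_schwT]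

/-- For `M > 0`, `L > 0` and `λ ∈ ℂ` with `λ + nL ≠ 0` for all `n ∈ ℤ`, the
product `((λ−M)(λ+M)/λ²) ∏_{n=1}^∞ ((λ+nL)²−M²)((λ−nL)²−M²)/((λ+nL)²(λ−nL)²)` converges to
`sin(π(λ−M)/L) sin(π(λ+M)/L)/sin²(πλ/L)`; consequently the monodromy matrix of the periodic
Schwarzschild solution, `∏_{n∈ℤ} T₀(λ+nL)`, equals
`−(sin(π(λ−M)/L) sin(π(λ+M)/L)/sin²(πλ/L)) σ₃`. -/
theorem statement12 (M L : ℝ) (hM : 0 < M) (hL : 0 < L) (lam : ℂ)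
    (hlam : ∀ n : ℤ, lam + (n : ℂ) * (L : ℂ) ≠ 0) :
    Multipliable (fun n : ℕ =>
      ((lam + ((n : ℂ) + 1) * L)^2 - (M : ℂ)^2) * ((lam - ((n : ℂ) + 1) * L)^2 - (M : ℂ)^2) /
        ((lam + ((n : ℂ) + 1) * L)^2 * (lam - ((n : ℂ) + 1) * L)^2)) ∧
    ((lam - (M : ℂ)) * (lam + (M : ℂ)) / lam^2) * ∏' n : ℕ,
      (((lam + ((n : ℂ) + 1) * L)^2 - (M : ℂ)^2) * ((lam - ((n : ℂ) + 1) * L)^2 - (M : ℂ)^2) /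
        ((lam + ((n : ℂ) + 1) * L)^2 * (lam - ((n : ℂ) + 1) * L)^2))
      = Complex.sin ((Real.pi : ℂ) * (lam - M) / L) * Complex.sin ((Real.pi : ℂ) * (lam + M) / L) /
          (Complex.sin ((Real.pi : ℂ) * lam / L))^2 ∧
    Filter.Tendsto
      (fun N : ℕ => schwT M lam *
        ((List.range N).map (fun n =>
          schwT M (lam + ((n : ℂ) + 1) * L) * schwT M (lam - ((n : ℂ) + 1) * L))).prod)
      Filter.atTop
      (nhds ((-(Complex.sin ((Real.pi : ℂ) * (lam - M) / L) *
          Complex.sin ((Real.pi : ℂ) * (lam + M) / L) /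
          (Complex.sin ((Real.pi : ℂ) * lam / L))^2)) • pauli3)) :=
  statement12_general M L hL lam hlam
end

section
/- Fix M > 0 and L > 2M, and let ω be the logarithm of the periodic Schwarzschild Ernst potential, ω(x,ρ) = ω₀(x,ρ) + ∑_{n=1}^∞ [ ω₀(x+nL,ρ) + ω₀(x−nL,ρ) + 4M/(nL) ]. Then for every ρ > 0, ∫_{−L/2}^{L/2} ω_x(x,ρ) ω_ρ(x,ρ) dx = 0. (This is the key identity implying that the conformal factor k, defined by k_x = (ρ/2) ω_x ω_ρ and k_ρ = (ρ/4)(ω_ρ² − ω_x²), is itself L-periodic in x.) -/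
lemma schwE_even (M x ρ : ℝ) : schwE M (-x) ρ = schwE M x ρ := by
  unfold schwE
  rw [show (-x - M)^2 = (x + M)^2 by ring, show (-x + M)^2 = (x - M)^2 by ring]
  ring

lemma schwOmega_even (M x ρ : ℝ) : schwOmega M (-x) ρ = schwOmega M x ρ := by
  unfold schwOmega; rw [schwE_even]

lemma perOmega_even (M L x ρ : ℝ) : perOmega M L (-x) ρ = perOmega M L x ρ := by
  unfold perOmega
  rw [schwOmega_even]
  congr 1
  apply tsum_congr
  intro n
  have h1 : -x + ((n : ℝ) + 1) * L = -(x - ((n : ℝ) + 1) * L) := by ring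
  have h2 : -x - ((n : ℝ) + 1) * L = -(x + ((n : ℝ) + 1) * L) := by ring
  rw [h1, h2, schwOmega_even, schwOmega_even]
  ring

/-- For `M > 0`, `L > 2M` and every `ρ > 0`, the logarithm `ω` of the
periodic Schwarzschild Ernst potential satisfies
`∫_{−L/2}^{L/2} ω_x(x,ρ) ω_ρ(x,ρ) dx = 0`
(the key identity implying `L`-periodicity of the conformal factor `k`). -/
theorem statement15 (M L : ℝ) (hM : 0 < M) (hL : 2*M < L) (ρ : ℝ) (hρ : 0 < ρ) :
    ∫ x in (-(L/2))..(L/2),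
      (deriv (fun t => perOmega M L t ρ) x) * (deriv (fun t => perOmega M L x t) ρ) = 0 := by
  set f : ℝ → ℝ := fun x =>
    (deriv (fun t => perOmega M L t ρ) x) * (deriv (fun t => perOmega M L x t) ρ) with hf
  have hodd : ∀ x, f (-x) = -f x := by
    intro x
    have hdx : deriv (fun t => perOmega M L t ρ) (-x)
        = -deriv (fun t => perOmega M L t ρ) x := by
      have heq : (fun t => perOmega M L t ρ) = (fun t => perOmega M L (-t) ρ) := by
        funext t; rw [perOmega_even]
      have h := deriv_comp_neg (f := fun t => perOmega M L t ρ) (x := x)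
      rw [← heq] at h
      linarith
    have hdρ : deriv (fun t => perOmega M L (-x) t) ρ
        = deriv (fun t => perOmega M L x t) ρ := by
      congr 1; funext t; exact perOmega_even M L x t
    simp only [hf, hdx, hdρ]; ring
  have h2 : (∫ x in (-(L/2))..(L/2), f (-x)) = ∫ x in (-(L/2))..(L/2), f x := by
    rw [intervalIntegral.integral_comp_neg]; norm_num
  have key : (∫ x in (-(L/2))..(L/2), f x) = -∫ x in (-(L/2))..(L/2), f x := by
    conv_lhs => rw [← h2]
    simp_rw [hodd]
    rw [intervalIntegral.integral_neg]
  linarith [key]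
end

section
/- Let λ₁ > λ₂ be real numbers, and let c₁, c₂ ∈ ℂ satisfy |c₁| = |c₂| = 1. For (x,ρ) ∈ ℝ × (0,∞) set r_j = √((x−λ_j)² + ρ²) for j = 1,2, and define the prolate ellipsoidal coordinates X = (r₁ + r₂)/(λ₁ − λ₂) and Y = (r₁ − r₂)/(λ₁ − λ₂). Define Γ(x,ρ) by 1/Γ = ((c₁ − c₂)/2) X + ((c₁ + c₂)/2) Y, and set E = (1 − Γ)/(1 + Γ). Then on the open subset of ℝ × (0,∞) where 1/Γ ≠ 0, Γ ≠ −1, and E + Ē ≠ 0, the complex function E satisfies the Ernst equation (E + Ē)( E_{xx} + E_ρ/ρ + E_{ρρ} ) = 2( E_x² + E_ρ² ). -/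
set_option maxHeartbeats 1000000

open Complex

private lemma hasDerivAt_csqrt_x (a ρ x : ℝ) (hρ : ρ ≠ 0) :
    HasDerivAt (fun t : ℝ => ((Real.sqrt ((t - a)^2 + ρ^2) : ℝ) : ℂ))
      (((x - a : ℝ) : ℂ) / ((Real.sqrt ((x - a)^2 + ρ^2) : ℝ) : ℂ)) x := by
  have h0 : (x - a)^2 + ρ^2 ≠ 0 := by positivity
  have h1 : HasDerivAt (fun t : ℝ => (t - a)^2 + ρ^2) (2*(x - a)) x := by
    simpa using (((hasDerivAt_id x).sub_const a).pow 2).add_const (ρ^2)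
  have h2 := (Real.hasDerivAt_sqrt h0).comp x h1
  have h3 : HasDerivAt (fun t : ℝ => Real.sqrt ((t - a)^2 + ρ^2))
      ((x - a)/Real.sqrt ((x - a)^2 + ρ^2)) x := by
    refine h2.congr_deriv ?_
    have hs : Real.sqrt ((x - a)^2 + ρ^2) ≠ 0 := by positivity
    field_simp
  have h4 := h3.ofReal_comp
  convert h4 using 1
  push_cast
  ring

private lemma hasDerivAt_csqrt_rho (u ρ : ℝ) (hρ : ρ ≠ 0) :
    HasDerivAt (fun s : ℝ => ((Real.sqrt (u^2 + s^2) : ℝ) : ℂ))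
      ((ρ : ℂ) / ((Real.sqrt (u^2 + ρ^2) : ℝ) : ℂ)) ρ := by
  have h0 : u^2 + ρ^2 ≠ 0 := by positivity
  have h1 : HasDerivAt (fun s : ℝ => u^2 + s^2) (2*ρ) ρ := by
    simpa using (((hasDerivAt_id ρ).pow 2)).const_add (u^2)
  have h2 := (Real.hasDerivAt_sqrt h0).comp ρ h1
  have h3 : HasDerivAt (fun s : ℝ => Real.sqrt (u^2 + s^2))
      (ρ/Real.sqrt (u^2 + ρ^2)) ρ := by
    refine h2.congr_deriv ?_
    have hs : Real.sqrt (u^2 + ρ^2) ≠ 0 := by positivity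
    field_simp
  have h4 := h3.ofReal_comp
  convert h4 using 1
  push_cast
  ring

private lemma hasDerivAt_quot_x (a ρ x : ℝ) (hρ : ρ ≠ 0) :
    HasDerivAt (fun t : ℝ => ((t - a : ℝ) : ℂ) / ((Real.sqrt ((t - a)^2 + ρ^2) : ℝ) : ℂ))
      ((((Real.sqrt ((x - a)^2 + ρ^2) : ℝ) : ℂ)^2 - ((x - a : ℝ) : ℂ)^2)
        / ((Real.sqrt ((x - a)^2 + ρ^2) : ℝ) : ℂ)^3) x := by
  have hs : (0:ℝ) < Real.sqrt ((x - a)^2 + ρ^2) := Real.sqrt_pos.2 (by positivity)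
  have hsC : ((Real.sqrt ((x - a)^2 + ρ^2) : ℝ) : ℂ) ≠ 0 := by
    exact_mod_cast ne_of_gt hs
  have hu : HasDerivAt (fun t : ℝ => ((t - a : ℝ) : ℂ)) ((1:ℝ) : ℂ) x := by
    exact ((hasDerivAt_id x).sub_const a).ofReal_comp
  have h2 := hu.div (hasDerivAt_csqrt_x a ρ x hρ) hsC
  refine h2.congr_deriv ?_
  rw [div_eq_div_iff (pow_ne_zero _ hsC) (pow_ne_zero _ hsC)]
  field_simp
  push_cast
  ring

private lemma hasDerivAt_quot_rho (u ρ : ℝ) (hρ : ρ ≠ 0) :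
    HasDerivAt (fun s : ℝ => ((s : ℝ) : ℂ) / ((Real.sqrt (u^2 + s^2) : ℝ) : ℂ))
      ((((Real.sqrt (u^2 + ρ^2) : ℝ) : ℂ)^2 - ((ρ : ℝ) : ℂ)^2)
        / ((Real.sqrt (u^2 + ρ^2) : ℝ) : ℂ)^3) ρ := by
  have hs : (0:ℝ) < Real.sqrt (u^2 + ρ^2) := Real.sqrt_pos.2 (by positivity)
  have hsC : ((Real.sqrt (u^2 + ρ^2) : ℝ) : ℂ) ≠ 0 := by
    exact_mod_cast ne_of_gt hs
  have hu : HasDerivAt (fun s : ℝ => ((s : ℝ) : ℂ)) ((1:ℝ) : ℂ) ρ := by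
    exact (hasDerivAt_id ρ).ofReal_comp
  have h2 := hu.div (hasDerivAt_csqrt_rho u ρ hρ) hsC
  refine h2.congr_deriv ?_
  rw [div_eq_div_iff (pow_ne_zero _ hsC) (pow_ne_zero _ hsC)]
  field_simp
  push_cast
  ring

private lemma EderivAt {A : ℝ → ℂ} {A' L : ℂ} {t : ℝ}
    (hA : HasDerivAt A A' t) (h : A t + L ≠ 0) :
    HasDerivAt (fun s => (A s - L)/(A s + L)) (2*L*A'/(A t + L)^2) t := by
  have h2 := (hA.sub_const L).div (hA.add_const L) h
  have e : 2*L*A'/(A t + L)^2 = (A' * (A t + L) - (A t - L) * A') / (A t + L)^2 := by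
    congr 1; ring
  rw [e]; exact h2

private lemma D1derivAt {A Ax : ℝ → ℂ} {A' Ax' L : ℂ} {t : ℝ}
    (hA : HasDerivAt A A' t) (hAx : HasDerivAt Ax Ax' t) (h : A t + L ≠ 0) :
    HasDerivAt (fun s => 2*L*(Ax s)/(A s + L)^2)
      (2*L*(Ax' * (A t + L) - 2*(Ax t * A'))/(A t + L)^3) t := by
  have hd : HasDerivAt (fun s => (A s + L)^2) (2*(A t + L)*A') t := by
    have hd2 := (hA.add_const L).mul (hA.add_const L)
    have hf : (fun s => (A s + L)^2) = fun s => (A s + L)*(A s + L) := by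
      funext s; ring
    rw [hf]
    refine hd2.congr_deriv ?_
    ring
  have h2 := (hAx.const_mul (2*L)).div hd (pow_ne_zero 2 h)
  have e : 2*L*(Ax' * (A t + L) - 2*(Ax t * A'))/(A t + L)^3
      = (2*L*Ax' * (A t + L)^2 - 2*L*(Ax t) * (2*(A t + L)*A')) / ((A t + L)^2)^2 := by
    rw [div_eq_div_iff (pow_ne_zero _ h) (pow_ne_zero _ (pow_ne_zero _ h))]
    ring
  rw [e]; exact h2

private noncomputable def Af (lam₁ lam₂ : ℝ) (c₁ c₂ : ℂ) (t s : ℝ) : ℂ :=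
  c₁ * ((Real.sqrt ((t - lam₁)^2 + s^2) : ℝ) : ℂ) - c₂ * ((Real.sqrt ((t - lam₂)^2 + s^2) : ℝ) : ℂ)

private noncomputable def D1x (lam₁ lam₂ : ℝ) (c₁ c₂ : ℂ) (L ρ : ℝ) (t : ℝ) : ℂ :=
  2*(L:ℂ)*(c₁ * (((t - lam₁ : ℝ):ℂ)/((Real.sqrt ((t - lam₁)^2 + ρ^2) : ℝ):ℂ))
    - c₂ * (((t - lam₂ : ℝ):ℂ)/((Real.sqrt ((t - lam₂)^2 + ρ^2) : ℝ):ℂ)))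
    /(Af lam₁ lam₂ c₁ c₂ t ρ + (L:ℂ))^2

private noncomputable def D1r (lam₁ lam₂ : ℝ) (c₁ c₂ : ℂ) (L x : ℝ) (s : ℝ) : ℂ :=
  2*(L:ℂ)*(c₁ * (((s : ℝ):ℂ)/((Real.sqrt ((x - lam₁)^2 + s^2) : ℝ):ℂ))
    - c₂ * (((s : ℝ):ℂ)/((Real.sqrt ((x - lam₂)^2 + s^2) : ℝ):ℂ)))
    /(Af lam₁ lam₂ c₁ c₂ x s + (L:ℂ))^2

private lemma Af_cont_x (lam₁ lam₂ : ℝ) (c₁ c₂ : ℂ) (ρ : ℝ) :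
    Continuous fun t => Af lam₁ lam₂ c₁ c₂ t ρ := by
  unfold Af
  exact (continuous_const.mul (Complex.continuous_ofReal.comp
      (Real.continuous_sqrt.comp (by continuity)))).sub
    (continuous_const.mul (Complex.continuous_ofReal.comp
      (Real.continuous_sqrt.comp (by continuity))))

private lemma Af_cont_rho (lam₁ lam₂ : ℝ) (c₁ c₂ : ℂ) (x : ℝ) :
    Continuous fun s => Af lam₁ lam₂ c₁ c₂ x s := by
  unfold Af
  exact (continuous_const.mul (Complex.continuous_ofReal.comp
      (Real.continuous_sqrt.comp (by continuity)))).sub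
    (continuous_const.mul (Complex.continuous_ofReal.comp
      (Real.continuous_sqrt.comp (by continuity))))

private lemma Af_deriv_x (lam₁ lam₂ : ℝ) (c₁ c₂ : ℂ) (ρ t : ℝ) (hρ : ρ ≠ 0) :
    HasDerivAt (fun t => Af lam₁ lam₂ c₁ c₂ t ρ)
      (c₁ * (((t - lam₁ : ℝ):ℂ)/((Real.sqrt ((t - lam₁)^2 + ρ^2) : ℝ):ℂ))
        - c₂ * (((t - lam₂ : ℝ):ℂ)/((Real.sqrt ((t - lam₂)^2 + ρ^2) : ℝ):ℂ))) t := by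
  unfold Af
  exact ((hasDerivAt_csqrt_x lam₁ ρ t hρ).const_mul c₁).sub
    ((hasDerivAt_csqrt_x lam₂ ρ t hρ).const_mul c₂)

private lemma Af_deriv_rho (lam₁ lam₂ x : ℝ) (c₁ c₂ : ℂ) (s : ℝ) (hs : s ≠ 0) :
    HasDerivAt (fun s => Af lam₁ lam₂ c₁ c₂ x s)
      (c₁ * (((s : ℝ):ℂ)/((Real.sqrt ((x - lam₁)^2 + s^2) : ℝ):ℂ))
        - c₂ * (((s : ℝ):ℂ)/((Real.sqrt ((x - lam₂)^2 + s^2) : ℝ):ℂ))) s := by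
  unfold Af
  exact ((hasDerivAt_csqrt_rho (x - lam₁) s hs).const_mul c₁).sub
    ((hasDerivAt_csqrt_rho (x - lam₂) s hs).const_mul c₂)

lemma key_aux (c1 c2 d1 d2 L R1 R2 U1 U2 p : ℂ)
    (h1 : R1^2 = U1^2 + p^2) (h2 : R2^2 = U2^2 + p^2)
    (hc1 : c1 * d1 = 1) (hc2 : c2 * d2 = 1)
    (hU : U1 - U2 = -L)
    (hR1 : R1 ≠ 0) (hR2 : R2 ≠ 0) (hp : p ≠ 0)
    (hA : c1*R1 - c2*R2 + L ≠ 0) (hB : d1*R1 - d2*R2 + L ≠ 0) :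
    ((c1*R1 - c2*R2 - L)/(c1*R1 - c2*R2 + L) + (d1*R1 - d2*R2 - L)/(d1*R1 - d2*R2 + L)) *
      ( 2*L*((c1*((R1^2-U1^2)/R1^3) - c2*((R2^2-U2^2)/R2^3))*(c1*R1-c2*R2+L)
              - 2*((c1*(U1/R1)-c2*(U2/R2))*(c1*(U1/R1)-c2*(U2/R2))))/(c1*R1-c2*R2+L)^3
        + (2*L*(c1*(p/R1)-c2*(p/R2))/(c1*R1-c2*R2+L)^2)/p
        + 2*L*((c1*((R1^2-p^2)/R1^3) - c2*((R2^2-p^2)/R2^3))*(c1*R1-c2*R2+L)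
              - 2*((c1*(p/R1)-c2*(p/R2))*(c1*(p/R1)-c2*(p/R2))))/(c1*R1-c2*R2+L)^3 )
    = 2*((2*L*(c1*(U1/R1)-c2*(U2/R2))/(c1*R1-c2*R2+L)^2)^2
        + (2*L*(c1*(p/R1)-c2*(p/R2))/(c1*R1-c2*R2+L)^2)^2) := by
  set A := c1*R1 - c2*R2 with hAdef
  set B := d1*R1 - d2*R2 with hBdef
  have hR13 : R1^3*R2^3*(A+L)^3 ≠ 0 :=
    mul_ne_zero (mul_ne_zero (pow_ne_zero _ hR1) (pow_ne_zero _ hR2)) (pow_ne_zero _ hA)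
  have hRA2 : R1*R2*(A+L)^2 ≠ 0 :=
    mul_ne_zero (mul_ne_zero hR1 hR2) (pow_ne_zero _ hA)
  have cvx : 2*L*(c1*(U1/R1)-c2*(U2/R2))/(A+L)^2
      = 2*L*(c1*U1*R2 - c2*U2*R1)/(R1*R2*(A+L)^2) := by
    rw [div_eq_div_iff (pow_ne_zero _ hA) hRA2]; field_simp
  have cvp : 2*L*(c1*(p/R1)-c2*(p/R2))/(A+L)^2
      = 2*L*p*(c1*R2 - c2*R1)/(R1*R2*(A+L)^2) := by
    rw [div_eq_div_iff (pow_ne_zero _ hA) hRA2]; field_simp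
  have cvxx : 2*L*((c1*((R1^2-U1^2)/R1^3) - c2*((R2^2-U2^2)/R2^3))*(A+L)
              - 2*((c1*(U1/R1)-c2*(U2/R2))*(c1*(U1/R1)-c2*(U2/R2))))/(A+L)^3
      = 2*L*((c1*(R1^2-U1^2)*R2^3 - c2*(R2^2-U2^2)*R1^3)*(A+L)
              - 2*(c1*U1*R2 - c2*U2*R1)^2*R1*R2)/(R1^3*R2^3*(A+L)^3) := by
    rw [div_eq_div_iff (pow_ne_zero _ hA) hR13]; field_simp
  have cvpp : 2*L*((c1*((R1^2-p^2)/R1^3) - c2*((R2^2-p^2)/R2^3))*(A+L)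
              - 2*((c1*(p/R1)-c2*(p/R2))*(c1*(p/R1)-c2*(p/R2))))/(A+L)^3
      = 2*L*((c1*(R1^2-p^2)*R2^3 - c2*(R2^2-p^2)*R1^3)*(A+L)
              - 2*p^2*(c1*R2 - c2*R1)^2*R1*R2)/(R1^3*R2^3*(A+L)^3) := by
    rw [div_eq_div_iff (pow_ne_zero _ hA) hR13]; field_simp
  rw [cvx, cvp, cvxx, cvpp]
  have hsum : (A - L)/(A + L) + (B - L)/(B + L) = 2*(A*B - L^2)/((A + L)*(B + L)) := by
    rw [div_add_div _ _ hA hB]; congr 1; ring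
  have hcore : (A*B - L^2)*(c1*R2 - c2*R1)*(R1*R2)
      = B*((c1*U1*R2 - c2*U2*R1)^2 + p^2*(c1*R2 - c2*R1)^2) := by
    linear_combination (c2*R2*p^2 + 2*c2*R2*U2^2 - 1*c2*R1^2*R2 + c2^2*d2*R2*p^2 - 1*c2^2*d2*R2^3 + c1*R1*p^2 + c1*R1*U2^2 - 1*c1*c2*d1*R2^3 - 1*c1^2*d2*R2*p^2 - 1*c1^2*d2*R2*U2^2 + c1^2*d1*R1*R2^2) * h1 + (-1*c2*R2*p^2 - 1*c2*R2*U2^2 + 2*c2*L*R2*U2 - 2*c2*L^2*R2 + c2^2*d1*R1^3 + c1*R1*p^2 - 1*c1*R1*U2^2 + c1*R1*R2^2 + c1*R1^3 + 2*c1*L*R1*U2 - 1*c1*L^2*R1 - 2*c1*c2*d2*R1*p^2 - 1*c1*c2*d1*R2*p^2 - 1*c1*c2*d1*R2*U2^2 + 2*c1*c2*d1*L*R2*U2 + c1^2*d2*R2*p^2 + c1^2*d2*R2*U2^2 - 1*c1^2*d2*R1^2*R2 - 2*c1^2*d2*L*R2*U2 + c1^2*d2*L^2*R2) * h2 + (-1*c2*R2*p^4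 - 2*c2*R2*U2^2*p^2 - 1*c2*R2*U2^4 + 2*c2*R1^2*R2*p^2 + 2*c2*R1^2*R2*U2^2 - 1*c2*R1^4*R2 + 2*c2*L*R2*U2*p^2 + 2*c2*L*R2*U2^3 - 2*c2*L*R1^2*R2*U2 - 1*c2*L^2*R2^3 + c1*R1*R2^2*U2^2 - 1*c1*R1*R2^2*U1*U2 - 1*c1*L*R1*R2^2*U2) * hc1 + (c2*R2*p^4 + c2*R2*U2^2*p^2 - 1*c2*R2^3*p^2 - 1*c2*R2^3*U2^2 + c2*R1^2*R2*U2^2 - 2*c2*L*R2*U2*p^2 + 2*c2*L*R2^3*U2 + c2*L^2*R2*p^2 - 1*c2*L^2*R2^3 - 2*c1*R1*p^4 - 2*c1*R1*U2^2*p^2 - 2*c1*R1*R2^2*U1*U2 + c1*R1*R2^4 + c1*R1^3*R2^2) * hc2 + (c2*R2*U2*p^2 + 2*c2*R2*U2^3 + c2*R2*U1*p^2 + 2*c2*R2*U1*U2^2 - 1*c2*R1^2*R2*U2 - 1*c2*R1^2*R2*U1 - 1*c2*L*R2*p^2 - 2*c2*L*R2*U2^2 + c2*L*R1^2*R2 +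 c2^2*d2*R2*U2*p^2 + c2^2*d2*R2*U1*p^2 - 1*c2^2*d2*R2^3*U2 - 1*c2^2*d2*R2^3*U1 - 1*c2^2*d2*L*R2*p^2 + c2^2*d2*L*R2^3 + c1*R1*U2*p^2 + c1*R1*U2^3 + c1*R1*U1*p^2 + c1*R1*U1*U2^2 - 3*c1*R1*R2^2*U2 - 1*c1*L*R1*p^2 - 1*c1*L*R1*U2^2 - 1*c1*c2*d1*R2^3*U2 - 1*c1*c2*d1*R2^3*U1 + 2*c1*c2*d1*R1^2*R2*U2 + c1*c2*d1*L*R2^3 - 1*c1^2*d2*R2*U2*p^2 - 1*c1^2*d2*R2*U2^3 - 1*c1^2*d2*R2*U1*p^2 - 1*c1^2*d2*R2*U1*U2^2 + c1^2*d2*R2^3*U2 + c1^2*d2*R2^3*U1 + c1^2*d2*L*R2*p^2 + c1^2*d2*L*R2*U2^2 - 1*c1^2*d2*L*R2^3 + c1^2*d1*R1*R2^2*U2) * hU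
  have hM : 2*L*((c1*(R1^2-U1^2)*R2^3 - c2*(R2^2-U2^2)*R1^3)*(A+L)
              - 2*(c1*U1*R2 - c2*U2*R1)^2*R1*R2)
        + 2*L*(c1*R2 - c2*R1)*R1^2*R2^2*(A+L)
        + 2*L*((c1*(R1^2-p^2)*R2^3 - c2*(R2^2-p^2)*R1^3)*(A+L)
              - 2*p^2*(c1*R2 - c2*R1)^2*R1*R2)
      = 4*L*R1*R2*(R1*R2*(c1*R2 - c2*R1)*(A+L)
          - ((c1*U1*R2 - c2*U2*R1)^2 + p^2*(c1*R2 - c2*R1)^2)) := by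
    linear_combination (2*c2*L^2*R1*p^2 + 2*c2*L^2*R1*U2^2 - 2*c2*L^2*R1*R2^2 + 2*c1*L^2*R2^3 - 2*c1*c2*L*p^4 - 4*c1*c2*L*U2^2*p^2 - 2*c1*c2*L*U2^4 + 2*c1*c2*L*R1^2*p^2 + 2*c1*c2*L*R1^2*U2^2 - 2*c1*c2*L*R1^2*R2^2 - 4*c1*c2*L^2*U2*p^2 - 4*c1*c2*L^2*U2^3 + 4*c1*c2*L^2*R2^2*U2 + 2*c1*c2*L^3*p^2 + 2*c1*c2*L^3*U2^2 - 2*c1*c2*L^3*R2^2 + 2*c1^2*L*R1*R2^3) * h1 + (-2*c2*L^2*R1*p^2 - 2*c2*L^2*R1*U2^2 + 4*c2*L^3*R1*U2 - 2*c2*L^4*R1 + 2*c2^2*L*R1^3*R2 + 2*c1*L^2*R2*U2^2 - 2*c1*L^2*R2*U1^2 - 4*c1*L^3*R2*U2 + 2*c1*L^4*R2 + 2*c1*c2*L*p^4 + 4*c1*c2*L*U2^2*p^2 + 2*c1*c2*L*U2^4 + 2*c1*c2*L*R2^2*p^2 + 2*c1*c2*L*R2^2*U2^2 - 4*c1*c2*L*R1^2*p^2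 - 4*c1*c2*L*R1^2*U2^2 - 2*c1*c2*L*R1^2*R2^2 - 4*c1*c2*L^2*R2^2*U2 - 8*c1*c2*L^3*U2^2 + 2*c1*c2*L^3*R2^2 + 8*c1*c2*L^4*U2 - 2*c1*c2*L^5) * h2 + (2*c2*L^2*R1*U2*p^2 + 2*c2*L^2*R1*U2^3 + 2*c2*L^2*R1*U1*p^2 + 2*c2*L^2*R1*U1*U2^2 - 2*c2*L^2*R1*R2^2*U2 - 2*c2*L^2*R1*R2^2*U1 - 2*c2*L^3*R1*p^2 - 2*c2*L^3*R1*U2^2 + 2*c2*L^3*R1*R2^2 - 2*c1*L^2*R2*U2*p^2 - 2*c1*L^2*R2*U2^3 - 2*c1*L^2*R2*U1*p^2 - 2*c1*L^2*R2*U1*U2^2 + 2*c1*L^2*R2^3*U2 + 2*c1*L^2*R2^3*U1 + 2*c1*L^3*R2*p^2 + 2*c1*L^3*R2*U2^2 - 2*c1*L^3*R2^3 - 2*c1*c2*L*U2*p^4 - 4*c1*c2*L*U2^3*p^2 - 2*c1*c2*L*U2^5 - 2*c1*c2*L*U1*p^4 - 4*c1*c2*L*U1*U2^2*p^2 - 2*c1*c2*L*U1*U2^4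 + 2*c1*c2*L*R2^4*U2 + 2*c1*c2*L*R2^4*U1 + 2*c1*c2*L*R1^2*U2*p^2 + 2*c1*c2*L*R1^2*U2^3 + 2*c1*c2*L*R1^2*U1*p^2 + 2*c1*c2*L*R1^2*U1*U2^2 - 2*c1*c2*L*R1^2*R2^2*U2 - 2*c1*c2*L*R1^2*R2^2*U1 + 2*c1*c2*L^2*p^4 - 2*c1*c2*L^2*U2^4 - 4*c1*c2*L^2*U1*U2*p^2 - 4*c1*c2*L^2*U1*U2^3 + 4*c1*c2*L^2*R2^2*U2^2 + 4*c1*c2*L^2*R2^2*U1*U2 - 2*c1*c2*L^2*R2^4 - 2*c1*c2*L^2*R1^2*p^2 - 2*c1*c2*L^2*R1^2*U2^2 + 2*c1*c2*L^2*R1^2*R2^2 + 6*c1*c2*L^3*U2*p^2 + 6*c1*c2*L^3*U2^3 + 2*c1*c2*L^3*U1*p^2 + 2*c1*c2*L^3*U1*U2^2 - 6*c1*c2*L^3*R2^2*U2 - 2*c1*c2*L^3*R2^2*U1 - 2*c1*c2*L^4*p^2 - 2*c1*c2*L^4*U2^2 + 2*c1*c2*L^4*R2^2) * hU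
  have hD1 : (A+L)*(B+L)*(R1^3*R2^3*(A+L)^3) ≠ 0 := mul_ne_zero (mul_ne_zero hA hB) hR13
  have hD2 : (R1*R2*(A+L)^2)^2 ≠ 0 := pow_ne_zero _ hRA2
  have hde : (2*L*p*(c1*R2 - c2*R1)/(R1*R2*(A+L)^2))/p
      = (2*L*(c1*R2 - c2*R1)*R1^2*R2^2*(A+L))/(R1^3*R2^3*(A+L)^3) := by
    rw [div_div, div_eq_div_iff (mul_ne_zero hRA2 hp) hR13]
    ring
  rw [hsum, hde, ← add_div, ← add_div, div_mul_div_comm]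
  rw [div_pow, div_pow, ← add_div, mul_div_assoc]
  rw [← mul_div_assoc, ← mul_div_assoc, div_eq_div_iff hD1 hD2]
  linear_combination (2*(A*B - L^2)*(R1*R2*(A+L)^2)^2) * hM + (8*L*R1^3*R2^3*(A+L)^5) * hcore
-- helpers assumed: anal.lean contents + key.lean contents will be concatenated
open Complex in
/-- Let `λ₁ > λ₂` be real, `c₁, c₂ ∈ ℂ` with `|c₁| = |c₂| = 1`.  With
`r_j = √((x−λ_j)²+ρ²)`, prolate ellipsoidal coordinates `X = (r₁+r₂)/(λ₁−λ₂)`,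
`Y = (r₁−r₂)/(λ₁−λ₂)`, `1/Γ = ((c₁−c₂)/2)X + ((c₁+c₂)/2)Y`, and `E = (1−Γ)/(1+Γ)`, the
potential `E` satisfies the Ernst equation
`(E+Ē)(E_{xx} + E_ρ/ρ + E_{ρρ}) = 2(E_x² + E_ρ²)`
at every point of `ℝ × (0,∞)` where `1/Γ ≠ 0`, `Γ ≠ −1` and `E + Ē ≠ 0`. -/
theorem statement16 (lam₁ lam₂ : ℝ) (hlam : lam₂ < lam₁) (c₁ c₂ : ℂ)
    (hc₁ : ‖c₁‖ = 1) (hc₂ : ‖c₂‖ = 1)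
    (X Y : ℝ → ℝ → ℝ)
    (hX : ∀ x ρ : ℝ, X x ρ =
      (Real.sqrt ((x - lam₁)^2 + ρ^2) + Real.sqrt ((x - lam₂)^2 + ρ^2)) / (lam₁ - lam₂))
    (hY : ∀ x ρ : ℝ, Y x ρ =
      (Real.sqrt ((x - lam₁)^2 + ρ^2) - Real.sqrt ((x - lam₂)^2 + ρ^2)) / (lam₁ - lam₂))
    (G : ℝ → ℝ → ℂ)
    (hG : ∀ x ρ : ℝ, G x ρ = (((c₁ - c₂)/2) * (X x ρ : ℂ) + ((c₁ + c₂)/2) * (Y x ρ : ℂ))⁻¹)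
    (E : ℝ → ℝ → ℂ) (hE : ∀ x ρ : ℝ, E x ρ = (1 - G x ρ) / (1 + G x ρ)) :
    ∀ x ρ : ℝ, 0 < ρ →
      ((c₁ - c₂)/2) * (X x ρ : ℂ) + ((c₁ + c₂)/2) * (Y x ρ : ℂ) ≠ 0 →
      G x ρ ≠ -1 →
      E x ρ + (starRingEnd ℂ) (E x ρ) ≠ 0 →
      (E x ρ + (starRingEnd ℂ) (E x ρ)) *
        (deriv (deriv (fun t => E t ρ)) x + deriv (fun t => E x t) ρ / (ρ : ℂ)
          + deriv (deriv (fun t => E x t)) ρ)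
      = 2 * ((deriv (fun t => E t ρ) x)^2 + (deriv (fun t => E x t) ρ)^2) := by
  intro x ρ hρpos hΞ hGneg _hEE
  have hρ' : ρ ≠ 0 := ne_of_gt hρpos
  set L : ℝ := lam₁ - lam₂ with hLdef
  have hL : L ≠ 0 := sub_ne_zero.2 (ne_of_gt hlam)
  have hLC : (L : ℂ) ≠ 0 := Complex.ofReal_ne_zero.2 hL
  -- the closed form of the potential ξ = A/L
  have hGA : ∀ t s : ℝ, ((c₁ - c₂)/2) * (X t s : ℂ) + ((c₁ + c₂)/2) * (Y t s : ℂ)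
      = Af lam₁ lam₂ c₁ c₂ t s / (L : ℂ) := by
    intro t s
    rw [hX t s, hY t s]
    unfold Af
    push_cast
    field_simp
    ring
  -- nonvanishing at the point
  have hA0 : Af lam₁ lam₂ c₁ c₂ x ρ ≠ 0 := by
    intro h
    apply hΞ
    rw [hGA x ρ, h, zero_div]
  have hALne : Af lam₁ lam₂ c₁ c₂ x ρ + (L : ℂ) ≠ 0 := by
    intro h
    apply hGneg
    rw [hG x ρ, hGA x ρ, eq_neg_of_add_eq_zero_left h, neg_div, div_self hLC, inv_neg, inv_one]
  -- closed form of E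
  have hEeq : ∀ t s : ℝ, Af lam₁ lam₂ c₁ c₂ t s ≠ 0 → Af lam₁ lam₂ c₁ c₂ t s + (L:ℂ) ≠ 0 →
      E t s = (Af lam₁ lam₂ c₁ c₂ t s - L)/(Af lam₁ lam₂ c₁ c₂ t s + L) := by
    intro t s h1 h2
    rw [hE t s, hG t s, hGA t s, inv_div]
    rw [div_eq_div_iff (by
      intro hz
      apply h2
      have : (1:ℂ) + (L:ℂ)/(Af lam₁ lam₂ c₁ c₂ t s) = (Af lam₁ lam₂ c₁ c₂ t s + L)/(Af lam₁ lam₂ c₁ c₂ t s) := by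
        field_simp
      rw [this] at hz
      rcases div_eq_zero_iff.1 hz with h | h
      · exact h
      · exact absurd h h1) h2]
    field_simp
  -- open sets where the closed form is valid
  have hWx : IsOpen {t : ℝ | Af lam₁ lam₂ c₁ c₂ t ρ ≠ 0 ∧ Af lam₁ lam₂ c₁ c₂ t ρ + (L:ℂ) ≠ 0} := by
    have h1 : IsOpen {t : ℝ | Af lam₁ lam₂ c₁ c₂ t ρ ≠ 0} :=
      isOpen_compl_singleton.preimage (Af_cont_x lam₁ lam₂ c₁ c₂ ρ)
    have h2 : IsOpen {t : ℝ | Af lam₁ lam₂ c₁ c₂ t ρ + (L:ℂ) ≠ 0} :=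
      isOpen_compl_singleton.preimage ((Af_cont_x lam₁ lam₂ c₁ c₂ ρ).add continuous_const)
    exact h1.inter h2
  have hWr : IsOpen {s : ℝ | 0 < s ∧ (Af lam₁ lam₂ c₁ c₂ x s ≠ 0 ∧ Af lam₁ lam₂ c₁ c₂ x s + (L:ℂ) ≠ 0)} := by
    have h1 : IsOpen {s : ℝ | Af lam₁ lam₂ c₁ c₂ x s ≠ 0} :=
      isOpen_compl_singleton.preimage (Af_cont_rho lam₁ lam₂ c₁ c₂ x)
    have h2 : IsOpen {s : ℝ | Af lam₁ lam₂ c₁ c₂ x s + (L:ℂ) ≠ 0} :=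
      isOpen_compl_singleton.preimage ((Af_cont_rho lam₁ lam₂ c₁ c₂ x).add continuous_const)
    exact isOpen_Ioi.inter (h1.inter h2)
  -- first derivatives (as functions on the open sets)
  have hd1x : ∀ t : ℝ, Af lam₁ lam₂ c₁ c₂ t ρ ≠ 0 → Af lam₁ lam₂ c₁ c₂ t ρ + (L:ℂ) ≠ 0 →
      HasDerivAt (fun t => E t ρ) (D1x lam₁ lam₂ c₁ c₂ L ρ t) t := by
    intro t h1 h2
    have hr : HasDerivAt (fun t => (Af lam₁ lam₂ c₁ c₂ t ρ - (L:ℂ))/(Af lam₁ lam₂ c₁ c₂ t ρ + (L:ℂ)))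
        (D1x lam₁ lam₂ c₁ c₂ L ρ t) t := by
      unfold D1x
      exact EderivAt (Af_deriv_x lam₁ lam₂ c₁ c₂ ρ t hρ') h2
    apply hr.congr_of_eventuallyEq
    filter_upwards [hWx.mem_nhds ⟨h1, h2⟩] with y hy
    exact hEeq y ρ hy.1 hy.2
  have hd1r : ∀ s : ℝ, 0 < s → Af lam₁ lam₂ c₁ c₂ x s ≠ 0 → Af lam₁ lam₂ c₁ c₂ x s + (L:ℂ) ≠ 0 →
      HasDerivAt (fun s => E x s) (D1r lam₁ lam₂ c₁ c₂ L x s) s := by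
    intro s hs h1 h2
    have hr : HasDerivAt (fun s => (Af lam₁ lam₂ c₁ c₂ x s - (L:ℂ))/(Af lam₁ lam₂ c₁ c₂ x s + (L:ℂ)))
        (D1r lam₁ lam₂ c₁ c₂ L x s) s := by
      unfold D1r
      exact EderivAt (Af_deriv_rho lam₁ lam₂ x c₁ c₂ s (ne_of_gt hs)) h2
    apply hr.congr_of_eventuallyEq
    filter_upwards [hWr.mem_nhds ⟨hs, h1, h2⟩] with y hy
    exact hEeq x y hy.2.1 hy.2.2
  -- point values
  set U₁ : ℝ := x - lam₁ with hU₁def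
  set U₂ : ℝ := x - lam₂ with hU₂def
  set R₁ : ℝ := Real.sqrt (U₁^2 + ρ^2) with hR₁def
  set R₂ : ℝ := Real.sqrt (U₂^2 + ρ^2) with hR₂def
  have hR₁pos : 0 < R₁ := Real.sqrt_pos.2 (by positivity)
  have hR₂pos : 0 < R₂ := Real.sqrt_pos.2 (by positivity)
  have hR₁C : (R₁ : ℂ) ≠ 0 := Complex.ofReal_ne_zero.2 (ne_of_gt hR₁pos)
  have hR₂C : (R₂ : ℂ) ≠ 0 := Complex.ofReal_ne_zero.2 (ne_of_gt hR₂pos)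
  have hρC : (ρ : ℂ) ≠ 0 := Complex.ofReal_ne_zero.2 hρ'
  -- first derivative values at the point, in literal form
  have hEd1x : deriv (fun t => E t ρ) x
      = 2*(L:ℂ)*(c₁*((U₁:ℂ)/(R₁:ℂ)) - c₂*((U₂:ℂ)/(R₂:ℂ)))/(c₁*(R₁:ℂ) - c₂*(R₂:ℂ) + (L:ℂ))^2 :=
    (hd1x x hA0 hALne).deriv
  have hEd1r : deriv (fun t => E x t) ρ
      = 2*(L:ℂ)*(c₁*((ρ:ℂ)/(R₁:ℂ)) - c₂*((ρ:ℂ)/(R₂:ℂ)))/(c₁*(R₁:ℂ) - c₂*(R₂:ℂ) + (L:ℂ))^2 :=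
    (hd1r ρ hρpos hA0 hALne).deriv
  -- second derivative values
  have hEd2x : deriv (deriv (fun t => E t ρ)) x
      = 2*(L:ℂ)*((c₁*(((R₁:ℂ)^2 - (U₁:ℂ)^2)/(R₁:ℂ)^3) - c₂*(((R₂:ℂ)^2 - (U₂:ℂ)^2)/(R₂:ℂ)^3))*(c₁*(R₁:ℂ) - c₂*(R₂:ℂ) + (L:ℂ))
          - 2*((c₁*((U₁:ℂ)/(R₁:ℂ)) - c₂*((U₂:ℂ)/(R₂:ℂ)))*(c₁*((U₁:ℂ)/(R₁:ℂ)) - c₂*((U₂:ℂ)/(R₂:ℂ)))))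
        /(c₁*(R₁:ℂ) - c₂*(R₂:ℂ) + (L:ℂ))^3 := by
    have hev : deriv (fun t => E t ρ) =ᶠ[nhds x] D1x lam₁ lam₂ c₁ c₂ L ρ := by
      filter_upwards [hWx.mem_nhds ⟨hA0, hALne⟩] with y hy
      exact (hd1x y hy.1 hy.2).deriv
    rw [Filter.EventuallyEq.deriv_eq hev]
    have hAxx : HasDerivAt (fun t : ℝ => c₁ * (((t - lam₁ : ℝ):ℂ)/((Real.sqrt ((t - lam₁)^2 + ρ^2) : ℝ):ℂ))
        - c₂ * (((t - lam₂ : ℝ):ℂ)/((Real.sqrt ((t - lam₂)^2 + ρ^2) : ℝ):ℂ)))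
        (c₁*(((R₁:ℂ)^2 - (U₁:ℂ)^2)/(R₁:ℂ)^3) - c₂*(((R₂:ℂ)^2 - (U₂:ℂ)^2)/(R₂:ℂ)^3)) x :=
      ((hasDerivAt_quot_x lam₁ ρ x hρ').const_mul c₁).sub ((hasDerivAt_quot_x lam₂ ρ x hρ').const_mul c₂)
    have h2 : HasDerivAt (D1x lam₁ lam₂ c₁ c₂ L ρ)
        (2*(L:ℂ)*((c₁*(((R₁:ℂ)^2 - (U₁:ℂ)^2)/(R₁:ℂ)^3) - c₂*(((R₂:ℂ)^2 - (U₂:ℂ)^2)/(R₂:ℂ)^3))*(c₁*(R₁:ℂ) - c₂*(R₂:ℂ) + (L:ℂ))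
          - 2*((c₁*((U₁:ℂ)/(R₁:ℂ)) - c₂*((U₂:ℂ)/(R₂:ℂ)))*(c₁*((U₁:ℂ)/(R₁:ℂ)) - c₂*((U₂:ℂ)/(R₂:ℂ)))))
        /(c₁*(R₁:ℂ) - c₂*(R₂:ℂ) + (L:ℂ))^3) x := by
      unfold D1x
      exact D1derivAt (Af_deriv_x lam₁ lam₂ c₁ c₂ ρ x hρ') hAxx hALne
    exact h2.deriv
  have hEd2r : deriv (deriv (fun t => E x t)) ρ
      = 2*(L:ℂ)*((c₁*(((R₁:ℂ)^2 - (ρ:ℂ)^2)/(R₁:ℂ)^3) - c₂*(((R₂:ℂ)^2 - (ρ:ℂ)^2)/(R₂:ℂ)^3))*(c₁*(R₁:ℂ) - c₂*(R₂:ℂ) + (L:ℂ))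
          - 2*((c₁*((ρ:ℂ)/(R₁:ℂ)) - c₂*((ρ:ℂ)/(R₂:ℂ)))*(c₁*((ρ:ℂ)/(R₁:ℂ)) - c₂*((ρ:ℂ)/(R₂:ℂ)))))
        /(c₁*(R₁:ℂ) - c₂*(R₂:ℂ) + (L:ℂ))^3 := by
    have hev : deriv (fun t => E x t) =ᶠ[nhds ρ] D1r lam₁ lam₂ c₁ c₂ L x := by
      filter_upwards [hWr.mem_nhds ⟨hρpos, hA0, hALne⟩] with y hy
      exact (hd1r y hy.1 hy.2.1 hy.2.2).deriv
    rw [Filter.EventuallyEq.deriv_eq hev]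
    have hAxx : HasDerivAt (fun s : ℝ => c₁ * (((s : ℝ):ℂ)/((Real.sqrt ((x - lam₁)^2 + s^2) : ℝ):ℂ))
        - c₂ * (((s : ℝ):ℂ)/((Real.sqrt ((x - lam₂)^2 + s^2) : ℝ):ℂ)))
        (c₁*(((R₁:ℂ)^2 - (ρ:ℂ)^2)/(R₁:ℂ)^3) - c₂*(((R₂:ℂ)^2 - (ρ:ℂ)^2)/(R₂:ℂ)^3)) ρ :=
      ((hasDerivAt_quot_rho (x - lam₁) ρ hρ').const_mul c₁).sub ((hasDerivAt_quot_rho (x - lam₂) ρ hρ').const_mul c₂)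
    have h2 : HasDerivAt (D1r lam₁ lam₂ c₁ c₂ L x)
        (2*(L:ℂ)*((c₁*(((R₁:ℂ)^2 - (ρ:ℂ)^2)/(R₁:ℂ)^3) - c₂*(((R₂:ℂ)^2 - (ρ:ℂ)^2)/(R₂:ℂ)^3))*(c₁*(R₁:ℂ) - c₂*(R₂:ℂ) + (L:ℂ))
          - 2*((c₁*((ρ:ℂ)/(R₁:ℂ)) - c₂*((ρ:ℂ)/(R₂:ℂ)))*(c₁*((ρ:ℂ)/(R₁:ℂ)) - c₂*((ρ:ℂ)/(R₂:ℂ)))))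
        /(c₁*(R₁:ℂ) - c₂*(R₂:ℂ) + (L:ℂ))^3) ρ := by
      unfold D1r
      exact D1derivAt (Af_deriv_rho lam₁ lam₂ x c₁ c₂ ρ hρ') hAxx hALne
    exact h2.deriv
  -- value of E and its conjugate at the point
  have hEx : E x ρ = (c₁*(R₁:ℂ) - c₂*(R₂:ℂ) - (L:ℂ))/(c₁*(R₁:ℂ) - c₂*(R₂:ℂ) + (L:ℂ)) :=
    hEeq x ρ hA0 hALne
  have hconjE : (starRingEnd ℂ) (E x ρ)
      = ((starRingEnd ℂ) c₁*(R₁:ℂ) - (starRingEnd ℂ) c₂*(R₂:ℂ) - (L:ℂ))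
        /((starRingEnd ℂ) c₁*(R₁:ℂ) - (starRingEnd ℂ) c₂*(R₂:ℂ) + (L:ℂ)) := by
    rw [hEx]
    simp [map_div₀, map_sub, map_add, map_mul, Complex.conj_ofReal]
  -- algebraic relations
  have h1C : (R₁:ℂ)^2 = (U₁:ℂ)^2 + (ρ:ℂ)^2 := by
    have h : R₁^2 = U₁^2 + ρ^2 := Real.sq_sqrt (by positivity)
    exact_mod_cast h
  have h2C : (R₂:ℂ)^2 = (U₂:ℂ)^2 + (ρ:ℂ)^2 := by
    have h : R₂^2 = U₂^2 + ρ^2 := Real.sq_sqrt (by positivity)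
    exact_mod_cast h
  have hc1C : c₁ * (starRingEnd ℂ) c₁ = 1 := by
    rw [Complex.mul_conj]; norm_cast; simp [Complex.normSq_eq_norm_sq, hc₁]
  have hc2C : c₂ * (starRingEnd ℂ) c₂ = 1 := by
    rw [Complex.mul_conj]; norm_cast; simp [Complex.normSq_eq_norm_sq, hc₂]
  have hUC : (U₁:ℂ) - (U₂:ℂ) = -(L:ℂ) := by
    have h : U₁ - U₂ = -L := by rw [hU₁def, hU₂def, hLdef]; ring
    exact_mod_cast h
  have hALne' : c₁*(R₁:ℂ) - c₂*(R₂:ℂ) + (L:ℂ) ≠ 0 := hALne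
  have hBne : (starRingEnd ℂ) c₁*(R₁:ℂ) - (starRingEnd ℂ) c₂*(R₂:ℂ) + (L:ℂ) ≠ 0 := by
    intro h
    apply hALne'
    have h2 : (starRingEnd ℂ) ((starRingEnd ℂ) c₁*(R₁:ℂ) - (starRingEnd ℂ) c₂*(R₂:ℂ) + (L:ℂ)) = 0 := by
      rw [h, map_zero]
    simpa [map_add, map_sub, map_mul, Complex.conj_ofReal] using h2
  rw [hEd2x, hEd2r, hEd1x, hEd1r, hconjE, hEx]
  exact key_aux c₁ c₂ ((starRingEnd ℂ) c₁) ((starRingEnd ℂ) c₂) (L:ℂ) (R₁:ℂ) (R₂:ℂ) (U₁:ℂ) (U₂:ℂ) (ρ:ℂ)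
    h1C h2C hc1C hc2C hUC hR₁C hR₂C hρC hALne' hBne
end

section
/- Fix M > 0 and a point (x,ρ) ∈ ℝ × (0,∞). For each L > 2M let E_L(x,ρ) = E₀(x,ρ) ∏_{n=1}^∞ E₀(x+nL,ρ) E₀(x−nL,ρ) exp(4M/(nL)) be the periodic Schwarzschild Ernst potential with mass M and period L, where E₀ is the Schwarzschild Ernst potential with mass M. Then E_L(x,ρ) converges pointwise to E₀(x,ρ) as L → ∞: lim_{L→∞} E_L(x,ρ) = E₀(x,ρ). -/
open Real Filter Topology

private lemma abs_le_sqrt' (b ρ : ℝ) : |b| ≤ Real.sqrt (b^2 + ρ^2) := by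
  rw [← Real.sqrt_sq_eq_abs]
  exact Real.sqrt_le_sqrt (by nlinarith [sq_nonneg ρ])

private lemma sqrt_le_abs_add' (b ρ : ℝ) (hρ : 0 ≤ ρ) : Real.sqrt (b^2 + ρ^2) ≤ |b| + ρ := by
  have h : b^2 + ρ^2 ≤ (|b| + ρ)^2 := by nlinarith [abs_nonneg b, sq_abs b]
  calc Real.sqrt (b^2 + ρ^2) ≤ Real.sqrt ((|b| + ρ)^2) := Real.sqrt_le_sqrt h
    _ = |b| + ρ := Real.sqrt_sq (by positivity)

private lemma abs_lt_sqrt' (b ρ : ℝ) (hρ : 0 < ρ) : |b| < Real.sqrt (b^2 + ρ^2) := by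
  rw [← Real.sqrt_sq_eq_abs]
  exact Real.sqrt_lt_sqrt (sq_nonneg b) (by nlinarith)

private lemma s_gt (M ρ y : ℝ) (hM : 0 < M) (hρ : 0 < ρ) :
    2*M < Real.sqrt ((y - M)^2 + ρ^2) + Real.sqrt ((y + M)^2 + ρ^2) := by
  have h1 := abs_lt_sqrt' (y - M) ρ hρ
  have h2 := abs_lt_sqrt' (y + M) ρ hρ
  have h3 : -(y - M) ≤ |y - M| := neg_le_abs _
  have h4 : y + M ≤ |y + M| := le_abs_self _
  linarith

private lemma s_ge (M ρ y : ℝ) :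
    2*|y| ≤ Real.sqrt ((y - M)^2 + ρ^2) + Real.sqrt ((y + M)^2 + ρ^2) := by
  have h1 := abs_le_sqrt' (y - M) ρ
  have h2 := abs_le_sqrt' (y + M) ρ
  rcases abs_cases y with ⟨h, _⟩ | ⟨h, _⟩
  · have h3 : y - M ≤ |y - M| := le_abs_self _
    have h4 : y + M ≤ |y + M| := le_abs_self _
    linarith
  · have h3 : -(y - M) ≤ |y - M| := neg_le_abs _
    have h4 : -(y + M) ≤ |y + M| := neg_le_abs _
    linarith

private lemma s_le (M ρ y : ℝ) (hρ : 0 ≤ ρ) :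
    Real.sqrt ((y - M)^2 + ρ^2) + Real.sqrt ((y + M)^2 + ρ^2) ≤ 2*|y| + 2*|M| + 2*ρ := by
  have h1 := sqrt_le_abs_add' (y - M) ρ hρ
  have h2 := sqrt_le_abs_add' (y + M) ρ hρ
  have h3 : |y - M| ≤ |y| + |M| := abs_sub _ _
  have h4 : |y + M| ≤ |y| + |M| := abs_add_le _ _
  linarith

private lemma schwE_pos (M ρ y : ℝ) (hM : 0 < M) (hρ : 0 < ρ) : 0 < schwE M y ρ := by
  have h := s_gt M ρ y hM hρ
  exact div_pos (by linarith) (by linarith)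

private lemma logE_bound (M ρ y : ℝ) (hM : 0 < M)
    (h2M : 2*M < Real.sqrt ((y - M)^2 + ρ^2) + Real.sqrt ((y + M)^2 + ρ^2)) :
    |Real.log (schwE M y ρ) + 4*M / (Real.sqrt ((y - M)^2 + ρ^2) + Real.sqrt ((y + M)^2 + ρ^2))|
      ≤ 8*M^2 / ((Real.sqrt ((y - M)^2 + ρ^2) + Real.sqrt ((y + M)^2 + ρ^2)) *
        ((Real.sqrt ((y - M)^2 + ρ^2) + Real.sqrt ((y + M)^2 + ρ^2)) - 2*M)) := by
  set s := Real.sqrt ((y - M)^2 + ρ^2) + Real.sqrt ((y + M)^2 + ρ^2) with hs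
  have hspos : 0 < s := by linarith
  have hsm : 0 < s - 2*M := by linarith
  have hsp : 0 < s + 2*M := by linarith
  have hE : schwE M y ρ = (s - 2*M)/(s + 2*M) := rfl
  have hEpos : 0 < (s - 2*M)/(s + 2*M) := div_pos hsm hsp
  have hup := Real.log_le_sub_one_of_pos hEpos
  have hlo := Real.one_sub_inv_le_log_of_pos hEpos
  have e1 : (s - 2*M)/(s + 2*M) - 1 = -(4*M/(s + 2*M)) := by field_simp; ring
  have e2 : 1 - ((s - 2*M)/(s + 2*M))⁻¹ = -(4*M/(s - 2*M)) := by
    rw [inv_div]; field_simp; ring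
  rw [hE, abs_le]
  constructor
  · have key : 4*M/s - 4*M/(s - 2*M) ≥ -(8*M^2 / (s * (s - 2*M))) := by
      rw [div_sub_div _ _ (ne_of_gt hspos) (ne_of_gt hsm), ge_iff_le, neg_le, ← neg_div,
        div_le_div_iff₀ (by positivity) (by positivity)]
      nlinarith [mul_pos (mul_pos hM (mul_pos hM hM)) hspos]
    rw [e2] at hlo
    linarith
  · have key : 4*M/s - 4*M/(s + 2*M) ≤ 8*M^2 / (s * (s - 2*M)) := by
      rw [div_sub_div _ _ (ne_of_gt hspos) (ne_of_gt hsp),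
        div_le_div_iff₀ (by positivity) (by positivity)]
      nlinarith [mul_pos (mul_pos hM (mul_pos hM hM)) hspos]
    rw [e1] at hup
    linarith

private lemma frac_helper (M a c : ℝ) (hM : 0 < M) (ha : 0 < a) (hc : 0 ≤ c) :
    4*M/a - 4*M/(a + c) ≤ 4*M*c/a^2 := by
  have hac : 0 < a + c := by linarith
  have e : 4*M/a - 4*M/(a + c) = 4*M*c/(a*(a + c)) := by field_simp; ring
  rw [e, sq]
  gcongr <;> nlinarith

private lemma frac_helper2 (M a c : ℝ) (hM : 0 < M) (hc : 0 ≤ c) (ha : 2*c + 1 ≤ a) :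
    4*M/(a - c) - 4*M/a ≤ 8*M*c/a^2 := by
  have ha0 : 0 < a := by linarith
  have hd : 0 < a - c := by linarith
  have e : 4*M/(a - c) - 4*M/a = 4*M*c/(a*(a - c)) := by field_simp; ring
  rw [e, div_le_div_iff₀ (by positivity) (by positivity)]
  nlinarith [mul_nonneg (mul_nonneg (mul_nonneg hM.le hc) ha0.le)
    (show (0:ℝ) ≤ a - 2*c by linarith)]

set_option maxHeartbeats 1000000 in
private lemma term_bound (M x ρ : ℝ) (hM : 0 < M) (hρ : 0 < ρ) (a : ℝ)
    (ha : 2*|x| + 2*M + 2*ρ + 1 ≤ a) :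
    |Real.log (schwE M (x + a) ρ) + Real.log (schwE M (x - a) ρ) + 4*M/a|
      ≤ (16*M^2 + 4*M*(3*|x| + M + ρ)) / a^2 := by
  have hx0 : 0 ≤ |x| := abs_nonneg x
  have ha0 : 0 < a := by linarith
  set sp := Real.sqrt ((x + a - M)^2 + ρ^2) + Real.sqrt ((x + a + M)^2 + ρ^2) with hsp
  set sm := Real.sqrt ((x - a - M)^2 + ρ^2) + Real.sqrt ((x - a + M)^2 + ρ^2) with hsm
  have hp1 : a - |x| ≤ |x + a| := by
    rcases abs_cases (x + a) with ⟨h,_⟩|⟨h,_⟩ <;> rcases abs_cases x with ⟨h2,_⟩|⟨h2,_⟩ <;> linarith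
  have hm1 : a - |x| ≤ |x - a| := by
    rcases abs_cases (x - a) with ⟨h,_⟩|⟨h,_⟩ <;> rcases abs_cases x with ⟨h2,_⟩|⟨h2,_⟩ <;> linarith
  have hp2 : |x + a| ≤ |x| + a := by
    rcases abs_cases (x + a) with ⟨h,_⟩|⟨h,_⟩ <;> rcases abs_cases x with ⟨h2,_⟩|⟨h2,_⟩ <;> linarith
  have hm2 : |x - a| ≤ |x| + a := by
    rcases abs_cases (x - a) with ⟨h,_⟩|⟨h,_⟩ <;> rcases abs_cases x with ⟨h2,_⟩|⟨h2,_⟩ <;> linarith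
  have hsp_lb : 2*(a - |x|) ≤ sp := by have := s_ge M ρ (x + a); linarith
  have hsm_lb : 2*(a - |x|) ≤ sm := by have := s_ge M ρ (x - a); linarith
  have hsp_ub : sp ≤ 2*a + 2*|x| + 2*M + 2*ρ := by
    have := s_le M ρ (x + a) hρ.le; rw [abs_of_pos hM] at this; linarith
  have hsm_ub : sm ≤ 2*a + 2*|x| + 2*M + 2*ρ := by
    have := s_le M ρ (x - a) hρ.le; rw [abs_of_pos hM] at this; linarith
  have hsp_gt : 2*M < sp := s_gt M ρ (x + a) hM hρ
  have hsm_gt : 2*M < sm := s_gt M ρ (x - a) hM hρ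
  have hsp_a : a ≤ sp - 2*M := by linarith
  have hsm_a : a ≤ sm - 2*M := by linarith
  have hsp_a' : a ≤ sp := by linarith
  have hsm_a' : a ≤ sm := by linarith
  have h1 : |Real.log (schwE M (x + a) ρ) + 4*M/sp| ≤ 8*M^2/a^2 := by
    refine (logE_bound M ρ (x + a) hM hsp_gt).trans ?_
    rw [sq]
    gcongr <;> nlinarith
  have h2 : |Real.log (schwE M (x - a) ρ) + 4*M/sm| ≤ 8*M^2/a^2 := by
    refine (logE_bound M ρ (x - a) hM hsm_gt).trans ?_
    rw [sq]
    gcongr <;> nlinarith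
  have h3 : |4*M/a - 4*M/sp - 4*M/sm| ≤ 4*M*(3*|x| + M + ρ)/a^2 := by
    have hd : 0 < a - |x| := by linarith
    rw [abs_le]
    constructor
    · have b1 : 4*M/sp ≤ 4*M/(2*(a - |x|)) := by gcongr
      have b2 : 4*M/sm ≤ 4*M/(2*(a - |x|)) := by gcongr
      have e12 : 4*M/(2*(a - |x|)) + 4*M/(2*(a - |x|)) = 4*M/(a - |x|) := by
        field_simp; ring
      have key := frac_helper2 M a (|x|) hM hx0 (by linarith)
      have comp : 8*M*|x|/a^2 ≤ 4*M*(3*|x| + M + ρ)/a^2 :=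
        div_le_div_of_nonneg_right (hc := by positivity)
          (hab := by nlinarith [mul_nonneg hM.le hx0, mul_pos hM hρ, mul_pos hM hM])
      linarith
    · have b1 : 4*M/(2*a + 2*|x| + 2*M + 2*ρ) ≤ 4*M/sp := by gcongr
      have b2 : 4*M/(2*a + 2*|x| + 2*M + 2*ρ) ≤ 4*M/sm := by gcongr
      have e12 : 4*M/(2*a + 2*|x| + 2*M + 2*ρ) + 4*M/(2*a + 2*|x| + 2*M + 2*ρ)
          = 4*M/(a + (|x| + M + ρ)) := by
        field_simp; ring
      have key := frac_helper M a (|x| + M + ρ) hM ha0 (by positivity)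
      have comp : 4*M*(|x| + M + ρ)/a^2 ≤ 4*M*(3*|x| + M + ρ)/a^2 :=
        div_le_div_of_nonneg_right (hc := by positivity) (hab := by nlinarith [mul_nonneg hM.le hx0])
      linarith
  have hdecomp : Real.log (schwE M (x + a) ρ) + Real.log (schwE M (x - a) ρ) + 4*M/a
      = (Real.log (schwE M (x + a) ρ) + 4*M/sp) + (Real.log (schwE M (x - a) ρ) + 4*M/sm)
        + (4*M/a - 4*M/sp - 4*M/sm) := by ring
  have hrhseq : (16*M^2 + 4*M*(3*|x| + M + ρ)) / a^2
      = 8*M^2/a^2 + 8*M^2/a^2 + 4*M*(3*|x| + M + ρ)/a^2 := by ring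
  have tri : ∀ A B C : ℝ, |A + B + C| ≤ |A| + |B| + |C| := fun A B C =>
    (abs_add_le _ _).trans (by linarith [abs_add_le A B])
  rw [hdecomp, hrhseq]
  exact (tri _ _ _).trans (by linarith)

theorem statement19 (M : ℝ) (hM : 0 < M) (x ρ : ℝ) (hρ : 0 < ρ) :
    Filter.Tendsto (fun L : ℝ => perE M L x ρ) Filter.atTop (nhds (schwE M x ρ)) := by
  have hx0 : 0 ≤ |x| := abs_nonneg x
  set L₀ : ℝ := 2*|x| + 2*M + 2*ρ + 1 with hL₀def
  have hL₀1 : 1 ≤ L₀ := by linarith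
  set C : ℝ := 16*M^2 + 4*M*(3*|x| + M + ρ) with hCdef
  have hC0 : 0 ≤ C := by nlinarith [mul_nonneg hM.le hx0, mul_pos hM hρ, mul_pos hM hM]
  set g : ℝ → ℕ → ℝ := fun L n =>
    Real.log (schwE M (x + ((n:ℝ) + 1) * L) ρ) + Real.log (schwE M (x - ((n:ℝ) + 1) * L) ρ)
      + 4*M/(((n:ℝ) + 1) * L) with hgdef
  -- summable majorant
  have hsum1 : Summable (fun n : ℕ => 1/((n:ℝ) + 1)^2) := by
    have h2 : Summable (fun n : ℕ => 1/((n:ℝ))^2) := summable_one_div_nat_pow.mpr one_lt_two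
    have h3 := (summable_nat_add_iff 1).mpr h2
    refine h3.congr fun n => ?_
    push_cast
    ring
  -- pointwise bound
  have hgbound : ∀ L : ℝ, L₀ ≤ L → ∀ n : ℕ, ‖g L n‖ ≤ C/L^2 * (1/((n:ℝ) + 1)^2) := by
    intro L hL n
    have hn0 : (0:ℝ) ≤ (n:ℝ) := Nat.cast_nonneg n
    have hL0 : 0 < L := by linarith
    have ha : L₀ ≤ ((n:ℝ) + 1) * L := by nlinarith
    have hb := term_bound M x ρ hM hρ (((n:ℝ) + 1) * L) (by rw [hL₀def] at ha; linarith)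
    have heq : C / (((n:ℝ) + 1) * L)^2 = C/L^2 * (1/((n:ℝ) + 1)^2) := by
      rw [mul_pow, div_mul_div_comm, mul_one, mul_comm (L^2)]
    rw [Real.norm_eq_abs]
    exact hb.trans (le_of_eq heq)
  -- summability of g L
  have hSumg : ∀ L : ℝ, L₀ ≤ L → Summable (g L) := by
    intro L hL
    exact Summable.of_norm_bounded (hsum1.mul_left (C/L^2)) (hgbound L hL)
  set K : ℝ := ∑' n : ℕ, 1/((n:ℝ) + 1)^2 with hKdef
  -- the tsum tends to 0
  have hS : Tendsto (fun L : ℝ => ∑' n : ℕ, g L n) atTop (𝓝 0) := by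
    apply squeeze_zero_norm' (a := fun L : ℝ => C*K/L^2)
    · filter_upwards [eventually_ge_atTop L₀] with L hL
      have hnorm : Summable (fun n => ‖g L n‖) :=
        Summable.of_nonneg_of_le (fun n => norm_nonneg _) (hgbound L hL)
          (hsum1.mul_left (C/L^2))
      refine (norm_tsum_le_tsum_norm hnorm).trans ?_
      have h1 : ∑' n, ‖g L n‖ ≤ ∑' n : ℕ, C/L^2 * (1/((n:ℝ) + 1)^2) :=
        Summable.tsum_le_tsum (hgbound L hL) hnorm (hsum1.mul_left (C/L^2))
      have h2 : ∑' n : ℕ, C/L^2 * (1/((n:ℝ) + 1)^2) = C/L^2 * K := hsum1.tsum_mul_left _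
      have h3 : C/L^2 * K = C*K/L^2 := by ring
      linarith
    · have := Filter.Tendsto.div_atTop (tendsto_const_nhds (x := C*K) (f := atTop))
        (tendsto_pow_atTop (two_ne_zero))
      exact this
  -- eventual equality of perE with schwE * exp(tsum)
  have heq : ∀ᶠ L in atTop, perE M L x ρ = schwE M x ρ * Real.exp (∑' n, g L n) := by
    filter_upwards [eventually_ge_atTop L₀] with L hL
    have hprod : HasProd (fun n => Real.exp (g L n)) (Real.exp (∑' n, g L n)) :=
      (hSumg L hL).hasSum.rexp
    have hfun : (fun n : ℕ => Real.exp (g L n)) = fun n : ℕ =>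
        schwE M (x + ((n:ℝ) + 1) * L) ρ * schwE M (x - ((n:ℝ) + 1) * L) ρ *
          Real.exp (4*M / (((n:ℝ) + 1) * L)) := by
      funext n
      rw [hgdef]
      rw [Real.exp_add, Real.exp_add,
        Real.exp_log (schwE_pos M ρ _ hM hρ), Real.exp_log (schwE_pos M ρ _ hM hρ)]
    rw [hfun] at hprod
    rw [perE, hprod.tprod_eq]
  -- conclude
  have hfinal : Tendsto (fun L : ℝ => schwE M x ρ * Real.exp (∑' n, g L n)) atTop
      (𝓝 (schwE M x ρ * Real.exp 0)) :=
    Filter.Tendsto.const_mul _ ((Real.continuous_exp.tendsto 0).comp hS)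
  rw [Real.exp_zero, mul_one] at hfinal
  exact hfinal.congr' (heq.mono fun L h => h.symm)
end
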